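/- arXiv:1007.4041 — 6 statements merged into one kernel-verified Lean document; each statement's English description precedes it below -/
import Mathlib

section
/- Let n, N, k be natural numbers with k ≥ 1. Let f : ℝⁿ → ℂ be of class C^k such that every partial derivative ∂^α f with |α| ≤ k has polynomial decay order N, and let g : ℝⁿ → ℂ be measurable with vanishing moments of order k and polynomial decay order N + k + n + 1. Then there exists a constant C, depending only on the decay constants of the ∂^α f and of g, such that for all x ∈ ℝⁿ and all 0 < t < 1: |(g * D_t f)(x)| ≤ C t^{k+n} (1 + t|x|)^{−N}. -/
open MeasureTheory

/-- The `L¹`-normalized dilation `D_t f (x) = tⁿ f(t • x)` on `ℝⁿ`. -/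
noncomputable def dil (n : ℕ) (t : ℝ) (f : EuclideanSpace ℝ (Fin n) → ℂ) :
    EuclideanSpace ℝ (Fin n) → ℂ :=
  fun x => (t : ℂ) ^ n * f (t • x)

/-- Convolution `(f * g)(x) = ∫ f(y) g(x − y) dy` on `ℝⁿ`. -/
noncomputable def conv (n : ℕ) (f g : EuclideanSpace ℝ (Fin n) → ℂ) :
    EuclideanSpace ℝ (Fin n) → ℂ :=
  fun x => ∫ y, f y * g (x - y)

/-- The monomial `x^α` associated to a multi-index `α`. -/
def mono (n : ℕ) (α : Fin n → ℕ) (x : EuclideanSpace ℝ (Fin n)) : ℂ :=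
  ∏ i, (x i : ℂ) ^ (α i)

/-- `f` has vanishing moments of order `k`: `∫ f(x) x^α dx = 0`, with absolute
convergence, for every multi-index `α` with `|α| ≤ k − 1`. -/
def VanishingMoments (n k : ℕ) (f : EuclideanSpace ℝ (Fin n) → ℂ) : Prop :=
  ∀ α : Fin n → ℕ, (∑ i, α i) + 1 ≤ k →
    Integrable (fun x => f x * mono n α x) ∧ (∫ x, f x * mono n α x) = 0

/-! Subtracting from `f (t • (x - y))` its Taylor polynomial of degree `k - 1` at `t • x` does not
change the convolution, because `g` annihilates polynomials of degree `< k`. Taylor's theorem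
bounds the remainder by `‖D^k f‖` on the segment times `(t‖y‖)^k`, and Peetre's inequality
`1 + ‖t • x‖ ≤ (1 + ‖t • x - u • t • y‖) (1 + ‖y‖)` turns the decay of `D^k f` along the segment
into `(1 + t‖x‖)^(-N)` at the price of `(1 + ‖y‖)^N`. The decay of `g` absorbs this factor and
`‖y‖^k`, leaving the integrable weight `(1 + ‖y‖)^(-(n + 1))`. -/

open Set Finset
open scoped Nat

-- Peetre's inequality
theorem one_add_norm_rpow_neg_le {E : Type*} [SeminormedAddCommGroup E] (a b : E) {s : ℝ}
    (hs : 0 ≤ s) : (1 + ‖a‖) ^ (-s) ≤ (1 + ‖a - b‖) ^ s * (1 + ‖b‖) ^ (-s) := by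
  have hb : 1 + ‖b‖ ≤ (1 + ‖a - b‖) * (1 + ‖a‖) := by
    have : ‖b‖ ≤ ‖a - b‖ + ‖a‖ := by
      simpa [sub_sub_cancel_left] using norm_sub_le (a - b) a
    nlinarith [norm_nonneg a, norm_nonneg (a - b)]
  have hab : 0 < 1 + ‖a - b‖ := by positivity
  calc (1 + ‖a‖) ^ (-s) = (1 + ‖a - b‖) ^ s * ((1 + ‖a - b‖) * (1 + ‖a‖)) ^ (-s) := by
        rw [Real.mul_rpow hab.le (by positivity), ← mul_assoc, ← Real.rpow_add hab,
          add_neg_cancel, Real.rpow_zero, one_mul]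
    _ ≤ (1 + ‖a - b‖) ^ s * (1 + ‖b‖) ^ (-s) :=
        mul_le_mul_of_nonneg_left
          (Real.rpow_le_rpow_of_nonpos (by positivity) hb (neg_nonpos.mpr hs)) (by positivity)

theorem nonneg_of_le_mul_one_add_norm_rpow {E : Type*} [SeminormedAddCommGroup E] {a C s : ℝ}
    {x : E} (ha : 0 ≤ a) (h : a ≤ C * (1 + ‖x‖) ^ s) : 0 ≤ C :=
  (mul_nonneg_iff_of_pos_right (by positivity)).mp (ha.trans h)

section Taylor

variable {E F G : Type*} [NormedAddCommGroup E] [NormedSpace ℝ E]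
  [NormedAddCommGroup F] [NormedSpace ℝ F] [SeminormedAddCommGroup G]

noncomputable def taylorSum (f : E → F) (k : ℕ) (c v : E) : F :=
  ∑ j ∈ range k, (j ! : ℝ)⁻¹ • iteratedFDeriv ℝ j f c (fun _ => v)

theorem iteratedDeriv_comp_add_smul {k j : ℕ} {f : E → F} (hf : ContDiff ℝ k f) (hj : j ≤ k)
    (c v : E) (s : ℝ) :
    iteratedDeriv j (fun u : ℝ => f (c + u • v)) s
      = iteratedFDeriv ℝ j f (c + s • v) (fun _ => v) := by
  have hcomp : (fun u : ℝ => f (c + u • v))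
      = (fun z => f (c + z)) ∘ ContinuousLinearMap.smulRight (ContinuousLinearMap.id ℝ ℝ) v := by
    ext u; simp
  rw [iteratedDeriv_eq_iteratedFDeriv, hcomp,
    ContinuousLinearMap.iteratedFDeriv_comp_right _ (f := fun z => f (c + z))
      (hf.comp (contDiff_const.add contDiff_id)) _ (by exact_mod_cast hj),
    iteratedFDeriv_comp_add_left]
  simp

theorem norm_sub_taylorSum_le {k : ℕ} {f : E → F} (hf : ContDiff ℝ (k + 1) f) {c v : E} {C : ℝ}
    (hC : ∀ u ∈ Icc (0 : ℝ) 1, ‖iteratedFDeriv ℝ (k + 1) f (c + u • v)‖ ≤ C) :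
    ‖f (c + v) - taylorSum f (k + 1) c v‖ ≤ C * ‖v‖ ^ (k + 1) / k ! := by
  set γ : ℝ → F := fun u => f (c + u • v)
  have hγ : ContDiff ℝ (k + 1) γ := hf.comp (contDiff_const.add (contDiff_id.smul contDiff_const))
  have hderiv : ∀ j ≤ k + 1, ∀ u ∈ Icc (0 : ℝ) 1, iteratedDerivWithin j γ (Icc 0 1) u
      = iteratedFDeriv ℝ j f (c + u • v) (fun _ => v) := fun j hj u hu => by
    rw [iteratedDerivWithin_eq_iteratedDeriv (uniqueDiffOn_Icc one_pos)
      ((hγ.of_le (by exact_mod_cast hj)).contDiffAt) hu,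
      iteratedDeriv_comp_add_smul hf (by exact_mod_cast hj)]
  have hbound : ∀ u ∈ Icc (0 : ℝ) 1,
      ‖iteratedDerivWithin (k + 1) γ (Icc 0 1) u‖ ≤ C * ‖v‖ ^ (k + 1) := fun u hu => by
      rw [hderiv _ le_rfl u hu]
      refine ((iteratedFDeriv ℝ (k + 1) f _).le_opNorm _).trans ?_
      simp only [prod_const, card_univ, Fintype.card_fin]
      gcongr
      exact hC u hu
  have htaylor : taylorWithinEval γ k (Icc 0 1) 0 1 = taylorSum f (k + 1) c v := by
    rw [taylor_within_apply, taylorSum]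
    refine sum_congr rfl fun j hj => ?_
    rw [hderiv j (mem_range.mp hj).le 0 (left_mem_Icc.mpr zero_le_one)]
    simp
  have := taylor_mean_remainder_bound zero_le_one hγ.contDiffOn (right_mem_Icc.mpr zero_le_one)
    hbound
  simpa [γ, htaylor] using this

theorem norm_sub_taylorSum_le_of_decay {k : ℕ} {f : E → F} (hf : ContDiff ℝ (k + 1) f)
    {C s : ℝ} (hs : 0 ≤ s) (hfd : ∀ z, ‖iteratedFDeriv ℝ (k + 1) f z‖ ≤ C * (1 + ‖z‖) ^ (-s))
    (c v : E) :
    ‖f (c + v) - taylorSum f (k + 1) c v‖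
      ≤ C * (1 + ‖v‖) ^ s * (1 + ‖c‖) ^ (-s) * ‖v‖ ^ (k + 1) / k ! := by
  have hC := nonneg_of_le_mul_one_add_norm_rpow (norm_nonneg _) (hfd 0)
  refine mul_assoc C _ _ ▸ norm_sub_taylorSum_le hf fun u hu => ?_
  have huv : ‖u • v‖ ≤ ‖v‖ := by
    rw [norm_smul, Real.norm_of_nonneg hu.1]
    exact mul_le_of_le_one_left (norm_nonneg v) hu.2
  calc ‖iteratedFDeriv ℝ (k + 1) f (c + u • v)‖ ≤ C * (1 + ‖c + u • v‖) ^ (-s) := hfd _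
    _ ≤ C * ((1 + ‖u • v‖) ^ s * (1 + ‖c‖) ^ (-s)) := by
        gcongr
        simpa using one_add_norm_rpow_neg_le (c + u • v) c hs
    _ ≤ C * ((1 + ‖v‖) ^ s * (1 + ‖c‖) ^ (-s)) := by gcongr

theorem norm_mul_norm_sub_taylorSum_le {k : ℕ} {f : E → F} (hf : ContDiff ℝ (k + 1) f)
    {Cf Cg s r t : ℝ} (hs : 0 ≤ s)
    (hfd : ∀ z, ‖iteratedFDeriv ℝ (k + 1) f z‖ ≤ Cf * (1 + ‖z‖) ^ (-s))
    {g : E → G} {y : E} (hgy : ‖g y‖ ≤ Cg * (1 + ‖y‖) ^ (-(s + (k + 1 : ℕ) + r)))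
    (ht : 0 ≤ t) (ht1 : t ≤ 1) (x : E) :
    ‖g y‖ * ‖f (t • x + (-t) • y) - taylorSum f (k + 1) (t • x) ((-t) • y)‖
      ≤ Cg * Cf / k ! * t ^ (k + 1) * (1 + t * ‖x‖) ^ (-s) * (1 + ‖y‖) ^ (-r) := by
  have hCf := nonneg_of_le_mul_one_add_norm_rpow (norm_nonneg _) (hfd 0)
  have hCg := nonneg_of_le_mul_one_add_norm_rpow (norm_nonneg _) hgy
  have hR := norm_sub_taylorSum_le_of_decay hf hs hfd (t • x) ((-t) • y)
  have hy : 0 < 1 + ‖y‖ := by positivity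
  have hty : t * ‖y‖ ≤ ‖y‖ := mul_le_of_le_one_left (norm_nonneg y) ht1
  have hexp : (1 + ‖y‖) ^ (-(s + (k + 1 : ℕ) + r)) * (1 + ‖y‖) ^ s * (1 + ‖y‖) ^ (k + 1)
      = (1 + ‖y‖) ^ (-r) := by
    rw [← Real.rpow_natCast, ← Real.rpow_add hy, ← Real.rpow_add hy]
    ring_nf
  rw [norm_smul, norm_smul, Real.norm_of_nonneg ht, norm_neg, Real.norm_of_nonneg ht] at hR
  calc ‖g y‖ * ‖f (t • x + (-t) • y) - taylorSum f (k + 1) (t • x) ((-t) • y)‖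
      ≤ Cg * (1 + ‖y‖) ^ (-(s + (k + 1 : ℕ) + r))
        * (Cf * (1 + t * ‖y‖) ^ s * (1 + t * ‖x‖) ^ (-s) * (t * ‖y‖) ^ (k + 1) / k !) :=
        mul_le_mul hgy hR (norm_nonneg _) (by positivity)
    _ ≤ Cg * (1 + ‖y‖) ^ (-(s + (k + 1 : ℕ) + r))
        * (Cf * (1 + ‖y‖) ^ s * (1 + t * ‖x‖) ^ (-s) * (t * (1 + ‖y‖)) ^ (k + 1) / k !) := by
        gcongr; linarith
    _ = Cg * Cf / k ! * t ^ (k + 1) * (1 + t * ‖x‖) ^ (-s) * (1 + ‖y‖) ^ (-r) := by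
        rw [← hexp, mul_pow]
        ring

end Taylor

section Moments

variable {n j : ℕ}

def multiIndexOf (r : Fin j → Fin n) : Fin n → ℕ := fun i => #{p | r p = i}

theorem sum_multiIndexOf (r : Fin j → Fin n) : ∑ i, multiIndexOf r i = j := by
  simp [multiIndexOf, ← card_eq_sum_card_fiberwise (fun p _ => mem_univ (r p))]

theorem prod_apply_eq_mono (r : Fin j → Fin n) (y : EuclideanSpace ℝ (Fin n)) :
    ((∏ p, y (r p) : ℝ) : ℂ) = mono n (multiIndexOf r) y := by
  rw [mono, Complex.ofReal_prod, ← prod_fiberwise univ r]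
  refine prod_congr rfl fun i _ => ?_
  rw [prod_congr rfl fun p hp => by rw [(mem_filter.mp hp).2], prod_const]
  rfl

theorem ContinuousMultilinearMap.apply_diag_eq_sum_mono
    (m : ContinuousMultilinearMap ℝ (fun _ : Fin j => EuclideanSpace ℝ (Fin n)) ℂ)
    (y : EuclideanSpace ℝ (Fin n)) :
    m (fun _ => y) = ∑ r : Fin j → Fin n,
      m (fun p => EuclideanSpace.single (r p) 1) * mono n (multiIndexOf r) y := by
  conv_lhs => rw [← (EuclideanSpace.basisFun (Fin n) ℝ).sum_repr y]
  rw [m.map_sum]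
  refine sum_congr rfl fun r _ => ?_
  rw [m.map_smul_univ, ← prod_apply_eq_mono, Complex.real_smul, mul_comm]
  simp

variable {k : ℕ} {g : EuclideanSpace ℝ (Fin n) → ℂ}

theorem VanishingMoments.mul_apply_diag (hg : VanishingMoments n k g) (hj : j < k)
    (m : ContinuousMultilinearMap ℝ (fun _ : Fin j => EuclideanSpace ℝ (Fin n)) ℂ) :
    Integrable (fun y => g y * m (fun _ => y)) ∧ ∫ y, g y * m (fun _ => y) = 0 := by
  have hmom (r : Fin j → Fin n) := hg (multiIndexOf r) (by rw [sum_multiIndexOf]; exact hj)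
  have hexp : (fun y => g y * m (fun _ => y)) = fun y => ∑ r : Fin j → Fin n,
      m (fun p => EuclideanSpace.single (r p) 1) * (g y * mono n (multiIndexOf r) y) := by
    ext y
    rw [m.apply_diag_eq_sum_mono, mul_sum]
    exact sum_congr rfl fun r _ => by ring
  have hint (r : Fin j → Fin n) :=
    (hmom r).1.const_mul (m (fun p => EuclideanSpace.single (r p) 1))
  refine ⟨hexp ▸ integrable_finsetSum _ fun r _ => hint r, ?_⟩
  rw [hexp, integral_finsetSum _ fun r _ => hint r]
  exact sum_eq_zero fun r _ => by rw [integral_const_mul, (hmom r).2, mul_zero]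

theorem VanishingMoments.mul_taylorSum (hg : VanishingMoments n k g)
    (f : EuclideanSpace ℝ (Fin n) → ℂ) (c : EuclideanSpace ℝ (Fin n)) (a : ℝ) :
    Integrable (fun y => g y * taylorSum f k c (a • y)) ∧
      ∫ y, g y * taylorSum f k c (a • y) = 0 := by
  set M : ∀ j, ContinuousMultilinearMap ℝ (fun _ : Fin j => EuclideanSpace ℝ (Fin n)) ℂ :=
    fun j => (j ! : ℝ)⁻¹ • (iteratedFDeriv ℝ j f c).compContinuousLinearMap
      fun _ => a • ContinuousLinearMap.id ℝ _
  have hexp : (fun y => g y * taylorSum f k c (a • y))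
      = fun y => ∑ j ∈ range k, g y * M j (fun _ => y) := by
    ext y
    simp [M, taylorSum, mul_sum]
  have hterm (j) (hj : j ∈ range k) := hg.mul_apply_diag (mem_range.mp hj) (M j)
  refine ⟨hexp ▸ integrable_finsetSum _ fun j hj => (hterm j hj).1, ?_⟩
  rw [hexp, integral_finsetSum _ fun j hj => (hterm j hj).1]
  exact sum_eq_zero fun j hj => (hterm j hj).2

end Moments

theorem conv_dil_eq_integral_sub_taylorSum {n k : ℕ} {f g : EuclideanSpace ℝ (Fin n) → ℂ}
    {B : ℝ} (hf : Continuous f) (hfB : ∀ z, ‖f z‖ ≤ B) (hg : Integrable g)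
    (hgmom : VanishingMoments n k g) (t : ℝ) (x : EuclideanSpace ℝ (Fin n)) :
    conv n g (dil n t f) x = (t : ℂ) ^ n *
      ∫ y, g y * (f (t • x + (-t) • y) - taylorSum f k (t • x) ((-t) • y)) := by
  have hgf : Integrable fun y => g y * f (t • x + (-t) • y) :=
    hg.mul_bdd (by fun_prop) (ae_of_all _ fun y => hfB _)
  have hT := hgmom.mul_taylorSum f (t • x) (-t)
  simp_rw [mul_sub]
  rw [integral_sub hgf hT.1, hT.2, sub_zero, ← integral_const_mul]
  refine integral_congr_ae (ae_of_all _ fun y => ?_)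
  simp only [dil, smul_sub, neg_smul, ← sub_eq_add_neg]
  ring

/-- Lemma 3.2(a) of Führ–Mayeli, Euclidean case: if all partial derivatives of `f` up to
order `k` have polynomial decay of order `N`, and `g` has vanishing moments of order `k`
and polynomial decay of order `N + k + n + 1`, then
`|(g * D_t f)(x)| ≤ C t^{k+n} (1 + t|x|)^{−N}` for all `x` and all `0 < t < 1`. -/
theorem decay_conv_a (n N k : ℕ) (hk : 1 ≤ k)
    (f g : EuclideanSpace ℝ (Fin n) → ℂ)
    (hf : ContDiff ℝ k f) (Cf : ℝ)
    (hfd : ∀ i : ℕ, i ≤ k → ∀ x, ‖iteratedFDeriv ℝ i f x‖ ≤ Cf * (1 + ‖x‖) ^ (-(N : ℝ)))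
    (hgm : Measurable g) (hgmom : VanishingMoments n k g) (Cg : ℝ)
    (hgd : ∀ x, ‖g x‖ ≤ Cg * (1 + ‖x‖) ^ (-((N : ℝ) + k + n + 1))) :
    ∃ C : ℝ, ∀ (x : EuclideanSpace ℝ (Fin n)) (t : ℝ), 0 < t → t < 1 →
      ‖conv n g (dil n t f) x‖ ≤ C * t ^ (k + n) * (1 + t * ‖x‖) ^ (-(N : ℝ)) := by
  obtain ⟨k, rfl⟩ : ∃ m, k = m + 1 := ⟨k - 1, by omega⟩
  have hweight (r : ℝ) (hr : n < r) :
      Integrable fun y : EuclideanSpace ℝ (Fin n) => (1 + ‖y‖) ^ (-r) :=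
    integrable_one_add_norm (by simpa using hr)
  have hgi : Integrable g := ((hweight _ (by linarith)).const_mul Cg).mono'
    hgm.aestronglyMeasurable (ae_of_all _ hgd)
  have hfB (z : EuclideanSpace ℝ (Fin n)) : ‖f z‖ ≤ Cf := by
    have hCf := nonneg_of_le_mul_one_add_norm_rpow (norm_nonneg _) (hfd 0 (by omega) 0)
    refine (norm_iteratedFDeriv_zero (𝕜 := ℝ) (f := f) ▸ hfd 0 (by omega) z).trans ?_
    exact mul_le_of_le_one_right hCf
      (Real.rpow_le_one_of_one_le_of_nonpos (by simp) (by simp))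
  refine ⟨Cg * Cf / k ! * ∫ y : EuclideanSpace ℝ (Fin n), (1 + ‖y‖) ^ (-(n + 1 : ℝ)),
    fun x t ht ht1 => ?_⟩
  rw [conv_dil_eq_integral_sub_taylorSum hf.continuous hfB hgi hgmom t x, norm_mul, norm_pow,
    Complex.norm_real, Real.norm_of_nonneg ht.le]
  have hpt (y : EuclideanSpace ℝ (Fin n)) :=
    norm_mul_norm_sub_taylorSum_le hf (Nat.cast_nonneg N) (hfd _ le_rfl) (r := n + 1)
      ((hgd y).trans_eq (by ring_nf)) ht.le ht1.le x
  calc t ^ n * ‖∫ y, g y * (f (t • x + (-t) • y) - taylorSum f (k + 1) (t • x) ((-t) • y))‖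
      ≤ t ^ n * ∫ y : EuclideanSpace ℝ (Fin n), Cg * Cf / k ! * t ^ (k + 1) *
          (1 + t * ‖x‖) ^ (-(N : ℝ)) * (1 + ‖y‖) ^ (-(n + 1 : ℝ)) := by
        gcongr
        exact norm_integral_le_of_norm_le ((hweight _ (by linarith)).const_mul _)
          (ae_of_all _ fun y => (norm_mul _ _).trans_le (hpt y))
    _ = _ := by rw [integral_const_mul]; ring
end

section
/- Let φ, ψ ∈ 𝓢(ℝⁿ) be Schwartz functions, both having vanishing moments of order k for some k ≥ 1. Then there exists a constant C such that for all t > 0: ‖φ * D_t ψ‖_{L¹(ℝⁿ)} ≤ C · min(t, t^{−1})^k. -/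
open MeasureTheory
open scoped ENNReal

/-
For `t ≥ 1`, `(φ * D_t ψ)(x) = ∫ ψ(y) φ(x - t⁻¹ y) dy`. Since `ψ` annihilates polynomials of
degree `< k`, `φ(x - t⁻¹ y)` may be replaced by its Taylor remainder of order `k` at `x`, which by
the decay of `D^k φ` and Peetre's inequality is
`O(t^{-k} |y|^k (1 + |y|)^{n+1} (1 + |x|)^{-(n+1)})`. Integrating against the rapidly decreasing
`ψ`, and then in `x`, gives `‖φ * D_t ψ‖₁ = O(t^{-k})`. For `t ≤ 1`,
`φ * D_t ψ = D_t (ψ * D_{1/t} φ)` and `D_t` preserves the `L¹` norm, so the same bound with `φ`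
and `ψ` exchanged gives `O(t^k)`.
-/

open scoped SchwartzMap

theorem one_add_norm_le_mul_one_add_norm_sub {E : Type*} [SeminormedAddCommGroup E] (x z : E) :
    1 + ‖x‖ ≤ (1 + ‖z‖) * (1 + ‖x - z‖) := by
  nlinarith [norm_le_norm_add_norm_sub' x z, norm_nonneg z, norm_nonneg (x - z)]

theorem eLpNorm_one_le_integral_of_norm_le {α E : Type*} [MeasurableSpace α] {μ : Measure α}
    [NormedAddCommGroup E] {f : α → E} {g : α → ℝ} (hg : Integrable g μ)
    (h : ∀ x, ‖f x‖ ≤ g x) : eLpNorm f 1 μ ≤ ENNReal.ofReal (∫ x, g x ∂μ) := by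
  have hg0 : ∀ x, 0 ≤ g x := fun x => (norm_nonneg _).trans (h x)
  calc eLpNorm f 1 μ ≤ eLpNorm g 1 μ := eLpNorm_mono_real h
    _ = ENNReal.ofReal (∫ x, ‖g x‖ ∂μ) := by
        rw [eLpNorm_one_eq_lintegral_enorm, ofReal_integral_norm_eq_lintegral_enorm hg]
    _ = _ := by simp_rw [Real.norm_of_nonneg (hg0 _)]

theorem integrable_inv_one_add_norm_pow {E : Type*} [NormedAddCommGroup E] [NormedSpace ℝ E]
    [FiniteDimensional ℝ E] [MeasurableSpace E] [BorelSpace E] {μ : Measure E}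
    [μ.IsAddHaarMeasure] {N : ℕ} (hN : Module.finrank ℝ E < N) :
    Integrable (fun x => ((1 + ‖x‖) ^ N)⁻¹) μ := by
  have hN' : (Module.finrank ℝ E : ℝ) < (N : ℝ) := by exact_mod_cast hN
  refine (integrable_one_add_norm hN').congr (ae_of_all _ fun x => ?_)
  simp

section Taylor

variable {E F : Type*} [NormedAddCommGroup E] [NormedSpace ℝ E]
  [NormedAddCommGroup F] [NormedSpace ℝ F]

noncomputable def taylorPolynomial (f : E → F) (m : ℕ) (x y : E) : F :=
  ∑ j ∈ Finset.range (m + 1), (j.factorial : ℝ)⁻¹ • iteratedFDeriv ℝ j f x (fun _ => y)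

theorem norm_sub_taylorPolynomial_le [CompleteSpace F] {f : E → F} {m : ℕ} {x y : E} {C : ℝ}
    (hf : ∀ t ∈ Set.Icc (0 : ℝ) 1, ContDiffAt ℝ (m + 1) f (x + t • y))
    (hC : ∀ t ∈ Set.Icc (0 : ℝ) 1, ‖iteratedFDeriv ℝ (m + 1) f (x + t • y)‖ ≤ C) :
    ‖f (x + y) - taylorPolynomial f m x y‖ ≤ C * ‖y‖ ^ (m + 1) / m.factorial := by
  rw [map_add_eq_sum_add_integral_iteratedFDeriv hf, taylorPolynomial, add_sub_cancel_left,
    norm_smul, norm_inv, RCLike.norm_natCast, inv_mul_eq_div]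
  gcongr
  have hremainder : ∀ t ∈ Set.uIoc (0 : ℝ) 1,
      ‖(1 - t) ^ m • iteratedFDeriv ℝ (m + 1) f (x + t • y) (fun _ => y)‖ ≤ C * ‖y‖ ^ (m + 1) := by
    intro t ht'
    rw [Set.uIoc_of_le zero_le_one] at ht'
    obtain ⟨ht0, ht1⟩ := ht'
    have ht : t ∈ Set.Icc (0 : ℝ) 1 := ⟨ht0.le, ht1⟩
    calc _ ≤ 1 * (‖iteratedFDeriv ℝ (m + 1) f (x + t • y)‖ * ‖y‖ ^ (m + 1)) := by
          rw [norm_smul]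
          gcongr
          · rw [norm_pow, Real.norm_of_nonneg (by linarith)]
            exact pow_le_one₀ (by linarith) (by linarith)
          · exact (iteratedFDeriv ℝ (m + 1) f _).le_opNorm_mul_pow_of_le (pi_norm_const_le y)
      _ ≤ C * ‖y‖ ^ (m + 1) := by rw [one_mul]; gcongr; exact hC t ht
  simpa using intervalIntegral.norm_integral_le_of_norm_le_const hremainder

end Taylor

namespace SchwartzMap

variable {E F : Type*} [NormedAddCommGroup E] [NormedSpace ℝ E]
  [NormedAddCommGroup F] [NormedSpace ℝ F]

theorem exists_one_add_norm_pow_mul_norm_sub_taylorPolynomial_le [CompleteSpace F]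
    (f : 𝓢(E, F)) (N m : ℕ) :
    ∃ M, 0 ≤ M ∧ ∀ x y : E, (1 + ‖x‖) ^ N * ‖f (x + y) - taylorPolynomial f m x y‖ ≤
      M * ((1 + ‖y‖) ^ N * ‖y‖ ^ (m + 1)) := by
  set S := 2 ^ N * (Finset.Iic (N, m + 1)).sup (fun p => SchwartzMap.seminorm ℝ p.1 p.2) f
  refine ⟨S / m.factorial, by positivity, fun x y => ?_⟩
  have hx : 0 < (1 + ‖x‖) ^ N := by positivity
  -- Peetre's inequality moves the decay of `D^{m+1} f` from `x + t • y` back to `x`.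
  have hderiv : ∀ t ∈ Set.Icc (0 : ℝ) 1,
      ‖iteratedFDeriv ℝ (m + 1) f (x + t • y)‖ ≤ S * (1 + ‖y‖) ^ N / (1 + ‖x‖) ^ N := by
    intro t ⟨ht0, ht1⟩
    set z := x + t • y
    have hxz : 1 + ‖x‖ ≤ (1 + ‖z‖) * (1 + ‖y‖) := by
      refine (one_add_norm_le_mul_one_add_norm_sub x z).trans ?_
      gcongr
      rw [show x - z = -(t • y) by simp [z], norm_neg, norm_smul, Real.norm_of_nonneg ht0]
      exact mul_le_of_le_one_left (norm_nonneg y) ht1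
    rw [le_div_iff₀ hx]
    calc _ ≤ ‖iteratedFDeriv ℝ (m + 1) f z‖ * ((1 + ‖z‖) ^ N * (1 + ‖y‖) ^ N) := by
          rw [← mul_pow]; gcongr
      _ = ((1 + ‖z‖) ^ N * ‖iteratedFDeriv ℝ (m + 1) f z‖) * (1 + ‖y‖) ^ N := by ring
      _ ≤ S * (1 + ‖y‖) ^ N := by
          gcongr
          exact one_add_le_sup_seminorm_apply (m := (N, m + 1)) le_rfl le_rfl f z
  have hrem := norm_sub_taylorPolynomial_le (fun t _ => (f.smooth ⊤).contDiffAt.of_le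
    (by exact_mod_cast le_top)) hderiv
  calc _ ≤ (1 + ‖x‖) ^ N * (S * (1 + ‖y‖) ^ N / (1 + ‖x‖) ^ N * ‖y‖ ^ (m + 1) / m.factorial) := by
        gcongr
    _ = S / m.factorial * ((1 + ‖y‖) ^ N * ‖y‖ ^ (m + 1)) := by
        field_simp

variable [MeasurableSpace E] [BorelSpace E] [SecondCountableTopology E] {μ : Measure E}
  [μ.HasTemperateGrowth]

theorem integrable_one_add_norm_pow_mul (f : 𝓢(E, F)) (p : ℕ) :
    Integrable (fun x => (1 + ‖x‖) ^ p * ‖f x‖) μ := by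
  have hexpand : (fun x => (1 + ‖x‖) ^ p * ‖f x‖) =
      fun x => ∑ i ∈ Finset.range (p + 1), (p.choose i : ℝ) * (‖x‖ ^ i * ‖f x‖) := by
    ext x
    rw [add_comm, add_pow, Finset.sum_mul]
    refine Finset.sum_congr rfl fun i _ => ?_
    ring
  rw [hexpand]
  exact integrable_finsetSum _ fun i _ => (f.integrable_pow_mul μ i).const_mul _

end SchwartzMap

section Euclidean

variable {n : ℕ}

def multiIndex {d : ℕ} (r : Fin d → Fin n) : Fin n → ℕ :=
  fun i => (Finset.univ.filter fun j : Fin d => r j = i).card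

theorem sum_multiIndex {d : ℕ} (r : Fin d → Fin n) : ∑ i, multiIndex r i = d := by
  simp only [multiIndex]
  rw [← Finset.card_eq_sum_card_fiberwise fun j _ => Finset.mem_univ (r j)]
  simp

theorem mono_multiIndex {d : ℕ} (r : Fin d → Fin n) (y : EuclideanSpace ℝ (Fin n)) :
    mono n (multiIndex r) y = ∏ j, (y (r j) : ℂ) := by
  classical
  rw [Finset.prod_comp (fun i => (y i : ℂ)) r, mono]
  symm
  apply Finset.prod_subset (Finset.subset_univ _)
  intro i _ hi
  rw [Finset.card_eq_zero.2, pow_zero]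
  exact Finset.filter_eq_empty_iff.2 fun j _ hj =>
    hi (hj ▸ Finset.mem_image_of_mem r (Finset.mem_univ j))

theorem ContinuousMultilinearMap.apply_const_eq_sum_mul_mono {d : ℕ}
    (L : ContinuousMultilinearMap ℝ (fun _ : Fin d => EuclideanSpace ℝ (Fin n)) ℂ)
    (y : EuclideanSpace ℝ (Fin n)) :
    L (fun _ => y) = ∑ r : Fin d → Fin n,
      L (fun j => EuclideanSpace.single (r j) 1) * mono n (multiIndex r) y := by
  classical
  have hy : y = ∑ i, y i • EuclideanSpace.single i (1 : ℝ) := by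
    simpa using ((EuclideanSpace.basisFun (Fin n) ℝ).sum_repr y).symm
  conv_lhs => rw [hy]
  rw [L.map_sum]
  refine Finset.sum_congr rfl fun r _ => ?_
  rw [L.map_smul_univ, mono_multiIndex, Complex.real_smul, mul_comm]
  push_cast
  rfl

theorem VanishingMoments.integrable_and_integral_mul_multilinear_eq_zero {k d : ℕ}
    {ψ : EuclideanSpace ℝ (Fin n) → ℂ} (hψ : VanishingMoments n k ψ) (hd : d < k)
    (L : ContinuousMultilinearMap ℝ (fun _ : Fin d => EuclideanSpace ℝ (Fin n)) ℂ) :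
    Integrable (fun y => ψ y * L (fun _ => y)) ∧ ∫ y, ψ y * L (fun _ => y) = 0 := by
  classical
  have hexpand : (fun y => ψ y * L (fun _ => y)) = fun y => ∑ r : Fin d → Fin n,
      L (fun j => EuclideanSpace.single (r j) 1) * (ψ y * mono n (multiIndex r) y) := by
    ext y
    rw [ContinuousMultilinearMap.apply_const_eq_sum_mul_mono, Finset.mul_sum]
    exact Finset.sum_congr rfl fun r _ => by ring
  have hmoment : ∀ r : Fin d → Fin n, (∑ i, multiIndex r i) + 1 ≤ k := fun r => by
    rw [sum_multiIndex]; exact hd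
  have hint : ∀ r : Fin d → Fin n, Integrable fun y =>
      L (fun j => EuclideanSpace.single (r j) 1) * (ψ y * mono n (multiIndex r) y) :=
    fun r => (hψ _ (hmoment r)).1.const_mul _
  rw [hexpand]
  refine ⟨integrable_finsetSum _ fun r _ => hint r, ?_⟩
  rw [integral_finsetSum _ fun r _ => hint r]
  refine Finset.sum_eq_zero fun r _ => ?_
  rw [integral_const_mul, (hψ _ (hmoment r)).2, mul_zero]

theorem VanishingMoments.integrable_and_integral_mul_taylorPolynomial_eq_zero {k m : ℕ}
    {ψ : EuclideanSpace ℝ (Fin n) → ℂ} (hψ : VanishingMoments n k ψ) (hm : m < k)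
    (f : EuclideanSpace ℝ (Fin n) → ℂ) (x : EuclideanSpace ℝ (Fin n)) (c : ℝ) :
    Integrable (fun y => ψ y * taylorPolynomial f m x (c • y)) ∧
      ∫ y, ψ y * taylorPolynomial f m x (c • y) = 0 := by
  have hterm : ∀ j ∈ Finset.range (m + 1),
      Integrable (fun y => ψ y * iteratedFDeriv ℝ j f x (fun _ => c • y)) ∧
        ∫ y, ψ y * iteratedFDeriv ℝ j f x (fun _ => c • y) = 0 := by
    intro j hj
    have hscale : (fun y => ψ y * iteratedFDeriv ℝ j f x (fun _ => c • y)) =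
        fun y => c ^ j • (ψ y * iteratedFDeriv ℝ j f x (fun _ => y)) := by
      ext y
      rw [(iteratedFDeriv ℝ j f x).map_smul_univ (fun _ => c) (fun _ => y), mul_smul_comm,
        Finset.prod_const, Finset.card_univ, Fintype.card_fin]
    obtain ⟨hint, hzero⟩ := hψ.integrable_and_integral_mul_multilinear_eq_zero
      (by rw [Finset.mem_range] at hj; omega) (iteratedFDeriv ℝ j f x)
    rw [hscale]
    exact ⟨hint.fun_smul _, by rw [integral_smul, hzero, smul_zero]⟩
  have hexpand : (fun y => ψ y * taylorPolynomial f m x (c • y)) = fun y =>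
      ∑ j ∈ Finset.range (m + 1),
        (j.factorial : ℝ)⁻¹ • (ψ y * iteratedFDeriv ℝ j f x (fun _ => c • y)) := by
    ext y
    simp only [taylorPolynomial, Finset.mul_sum, mul_smul_comm]
  rw [hexpand]
  refine ⟨integrable_finsetSum _ fun j hj => (hterm j hj).1.fun_smul _, ?_⟩
  rw [integral_finsetSum _ fun j hj => (hterm j hj).1.fun_smul _]
  exact Finset.sum_eq_zero fun j hj => by rw [integral_smul, (hterm j hj).2, smul_zero]

theorem eLpNorm_one_dil {t : ℝ} (ht : 0 < t) (f : EuclideanSpace ℝ (Fin n) → ℂ) :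
    eLpNorm (dil n t f) 1 volume = eLpNorm f 1 volume := by
  have hmap : ∫⁻ x, ‖f (t • x)‖ₑ = ENNReal.ofReal (t ^ n)⁻¹ * ∫⁻ x, ‖f x‖ₑ := by
    have h :=
      lintegral_map_equiv (μ := volume) (fun x => ‖f x‖ₑ) (MeasurableEquiv.smul₀ t ht.ne')
    rw [MeasurableEquiv.coe_smul₀, Measure.map_addHaar_smul volume ht.ne',
      finrank_euclideanSpace_fin, lintegral_smul_measure] at h
    rw [← h, abs_of_pos (by positivity)]
    rfl
  simp only [eLpNorm_one_eq_lintegral_enorm, dil, enorm_mul]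
  have ht' : ‖(t : ℂ) ^ n‖ₑ = ENNReal.ofReal (t ^ n) := by
    rw [← ofReal_norm, norm_pow, Complex.norm_real, Real.norm_of_nonneg ht.le]
  rw [lintegral_const_mul' _ _ enorm_ne_top, hmap, ← mul_assoc, ht',
    ← ENNReal.ofReal_mul (by positivity), mul_inv_cancel₀ (by positivity), ENNReal.ofReal_one,
    one_mul]

theorem conv_dil_apply {t : ℝ} (ht : 0 < t) (φ ψ : EuclideanSpace ℝ (Fin n) → ℂ)
    (x : EuclideanSpace ℝ (Fin n)) :
    conv n φ (dil n t ψ) x = ∫ y, ψ y * φ (x - t⁻¹ • y) := by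
  have hsub : conv n φ (dil n t ψ) x = ∫ z, φ (x - z) * dil n t ψ z := by
    rw [conv, ← integral_sub_left_eq_self _ volume x]
    simp_rw [sub_sub_cancel]
  have hscale := Measure.integral_comp_smul volume (fun y => ψ y * φ (x - t⁻¹ • y)) t
  simp only [finrank_euclideanSpace_fin, smul_smul, inv_mul_cancel₀ ht.ne', one_smul] at hscale
  rw [abs_of_pos (by positivity)] at hscale
  calc _ = (t : ℂ) ^ n * ∫ y, ψ (t • y) * φ (x - y) := by
        rw [hsub, ← integral_const_mul]
        exact integral_congr_ae (ae_of_all _ fun y => by simp only [dil]; ring)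
    _ = _ := by
        rw [hscale, Complex.real_smul, ← mul_assoc]
        push_cast
        rw [mul_inv_cancel₀ (by exact_mod_cast (pow_pos ht n).ne'), one_mul]

theorem conv_dil_eq_dil_conv {t : ℝ} (ht : 0 < t) (φ ψ : EuclideanSpace ℝ (Fin n) → ℂ) :
    conv n φ (dil n t ψ) = dil n t (conv n ψ (dil n t⁻¹ φ)) := by
  ext x
  rw [dil, conv_dil_apply (inv_pos.2 ht), inv_inv, conv, ← integral_const_mul]
  refine integral_congr_ae (ae_of_all _ fun y => ?_)
  simp only [dil, smul_sub]
  ring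

theorem VanishingMoments.exists_norm_integral_mul_sub_smul_le {k : ℕ} (hk : 1 ≤ k)
    (φ ψ : 𝓢(EuclideanSpace ℝ (Fin n), ℂ)) (hψ : VanishingMoments n k ψ) (N : ℕ) :
    ∃ A, ∀ ε : ℝ, 0 ≤ ε → ε ≤ 1 → ∀ x,
      ‖∫ y, ψ y * φ (x - ε • y)‖ ≤ A * ε ^ k * ((1 + ‖x‖) ^ N)⁻¹ := by
  obtain ⟨m, rfl⟩ : ∃ m, k = m + 1 := ⟨k - 1, by omega⟩
  obtain ⟨M, hM0, hM⟩ := φ.exists_one_add_norm_pow_mul_norm_sub_taylorPolynomial_le N m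
  set g := fun y => (1 + ‖y‖) ^ (N + (m + 1)) * ‖ψ y‖
  have hg : Integrable g := ψ.integrable_one_add_norm_pow_mul _
  refine ⟨M * ∫ y, g y, fun ε hε0 hε1 x => ?_⟩
  set P := fun y => taylorPolynomial φ m x ((-ε) • y)
  obtain ⟨hPint, hPzero⟩ :=
    hψ.integrable_and_integral_mul_taylorPolynomial_eq_zero (Nat.lt_succ_self m) φ x (-ε)
  have hφint : Integrable fun y => ψ y * φ (x + (-ε) • y) :=
    ψ.integrable.mul_bdd (by fun_prop) (ae_of_all _ fun y => φ.norm_le_seminorm ℝ _)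
  -- `ψ` annihilates the Taylor polynomial, so only the Taylor remainder of `φ` contributes.
  have hsub : ∫ y, ψ y * φ (x - ε • y) = ∫ y, ψ y * (φ (x + (-ε) • y) - P y) := by
    simp_rw [mul_sub]
    rw [integral_sub hφint hPint, hPzero, sub_zero]
    simp [sub_eq_add_neg]
  have hx : 0 < (1 + ‖x‖) ^ N := by positivity
  have hbound : ∀ y, ‖ψ y * (φ (x + (-ε) • y) - P y)‖ ≤
      M * ε ^ (m + 1) * ((1 + ‖x‖) ^ N)⁻¹ * g y := by
    intro y
    have hy : ‖(-ε) • y‖ = ε * ‖y‖ := by rw [norm_smul, norm_neg, Real.norm_of_nonneg hε0]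
    have hdecay : (1 + ‖(-ε) • y‖) ^ N * ‖(-ε) • y‖ ^ (m + 1) ≤
        ε ^ (m + 1) * (1 + ‖y‖) ^ (N + (m + 1)) := by
      have : ε * ‖y‖ ≤ ‖y‖ := mul_le_of_le_one_left (norm_nonneg y) hε1
      rw [hy, mul_pow, pow_add (1 + ‖y‖)]
      calc _ ≤ (1 + ‖y‖) ^ N * (ε ^ (m + 1) * (1 + ‖y‖) ^ (m + 1)) := by
            gcongr; linarith [norm_nonneg y]
        _ = _ := by ring
    have hrem : ‖φ (x + (-ε) • y) - P y‖ ≤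
        M * (ε ^ (m + 1) * (1 + ‖y‖) ^ (N + (m + 1))) / (1 + ‖x‖) ^ N := by
      rw [le_div_iff₀' hx]
      exact (hM x _).trans (by gcongr)
    rw [norm_mul]
    calc _ ≤ ‖ψ y‖ * (M * (ε ^ (m + 1) * (1 + ‖y‖) ^ (N + (m + 1))) / (1 + ‖x‖) ^ N) := by
          gcongr
      _ = _ := by simp only [g]; field_simp
  rw [hsub]
  calc _ ≤ ∫ y, M * ε ^ (m + 1) * ((1 + ‖x‖) ^ N)⁻¹ * g y :=
        norm_integral_le_of_norm_le (hg.const_mul _) (ae_of_all _ hbound)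
    _ = _ := by rw [integral_const_mul]; ring

theorem VanishingMoments.exists_eLpNorm_conv_dil_le_of_one_le {k : ℕ} (hk : 1 ≤ k)
    (φ ψ : 𝓢(EuclideanSpace ℝ (Fin n), ℂ)) (hψ : VanishingMoments n k ψ) :
    ∃ C, ∀ t : ℝ, 1 ≤ t →
      eLpNorm (conv n φ (dil n t ψ)) 1 volume ≤ ENNReal.ofReal (C * t⁻¹ ^ k) := by
  obtain ⟨A, hA⟩ := hψ.exists_norm_integral_mul_sub_smul_le hk φ ψ (n + 1)
  have hw : Integrable fun x : EuclideanSpace ℝ (Fin n) => ((1 + ‖x‖) ^ (n + 1))⁻¹ :=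
    integrable_inv_one_add_norm_pow (by simp)
  refine ⟨A * ∫ x : EuclideanSpace ℝ (Fin n), ((1 + ‖x‖) ^ (n + 1))⁻¹, fun t ht => ?_⟩
  have ht0 : 0 < t := zero_lt_one.trans_le ht
  calc _ ≤ ENNReal.ofReal (∫ x : EuclideanSpace ℝ (Fin n),
        A * t⁻¹ ^ k * ((1 + ‖x‖) ^ (n + 1))⁻¹) :=
        eLpNorm_one_le_integral_of_norm_le (hw.const_mul _) fun x => by
          rw [conv_dil_apply ht0]
          exact hA _ (by positivity) (inv_le_one_of_one_le₀ ht) x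
    _ = _ := by rw [integral_const_mul]; ring_nf

end Euclidean

/-- For Schwartz functions `φ, ψ` with vanishing moments of order `k ≥ 1`, there is a
constant `C` with `‖φ * D_t ψ‖_{L¹} ≤ C · min(t, t⁻¹)^k` for all `t > 0`. -/
theorem L1_norm_conv_dilate (n k : ℕ) (hk : 1 ≤ k)
    (φ ψ : SchwartzMap (EuclideanSpace ℝ (Fin n)) ℂ)
    (hφ : VanishingMoments n k ⇑φ) (hψ : VanishingMoments n k ⇑ψ) :
    ∃ C : ℝ, ∀ t : ℝ, 0 < t →
      eLpNorm (conv n ⇑φ (dil n t ⇑ψ)) 1 volume ≤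
        ENNReal.ofReal (C * min t t⁻¹ ^ k) := by
  obtain ⟨C₁, hC₁⟩ := hψ.exists_eLpNorm_conv_dil_le_of_one_le hk φ ψ
  obtain ⟨C₂, hC₂⟩ := hφ.exists_eLpNorm_conv_dil_le_of_one_le hk ψ φ
  refine ⟨max C₁ C₂, fun t ht => ?_⟩
  rcases le_total 1 t with h1t | ht1
  · rw [min_eq_right ((inv_le_one_of_one_le₀ h1t).trans h1t)]
    exact (hC₁ t h1t).trans (by gcongr; exact le_max_left _ _)
  · have h1t : 1 ≤ t⁻¹ := (one_le_inv₀ ht).2 ht1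
    rw [min_eq_left (ht1.trans h1t), conv_dil_eq_dil_conv ht, eLpNorm_one_dil ht]
    calc _ ≤ ENNReal.ofReal (C₂ * t⁻¹⁻¹ ^ k) := hC₂ t⁻¹ h1t
      _ ≤ _ := by rw [inv_inv]; gcongr; exact le_max_right _ _
end

section
/- Let g ∈ 𝓢(ℝⁿ) be a Schwartz function and let f ∈ 𝓢(ℝⁿ) be a Schwartz function all of whose moments vanish, i.e. ∫_{ℝⁿ} f(x) x^α dx = 0 for every multi-index α. Then the convolution g * f also has all moments vanishing: for every multi-index α, ∫_{ℝⁿ} (g * f)(x) x^α dx = 0, the integral converging absolutely. -/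
open MeasureTheory

lemma abs_coord_le_norm {n : ℕ} (x : EuclideanSpace ℝ (Fin n)) (i : Fin n) :
    |x i| ≤ ‖x‖ := by
  rw [EuclideanSpace.norm_eq]
  rw [show |x i| = Real.sqrt (|x i| ^ 2) by rw [Real.sqrt_sq (abs_nonneg _)]]
  apply Real.sqrt_le_sqrt
  rw [sq_abs]
  simp only [Real.norm_eq_abs, sq_abs]
  exact Finset.single_le_sum (f := fun j => x j ^ 2) (fun j _ => sq_nonneg _)
    (Finset.mem_univ i)

lemma continuous_mono (n : ℕ) (β : Fin n → ℕ) : Continuous (mono n β) := by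
  unfold mono
  apply continuous_finset_prod
  intro i _
  exact (Complex.continuous_ofReal.comp (EuclideanSpace.proj i).continuous).pow _

lemma norm_mono_le {n : ℕ} (β : Fin n → ℕ) (x : EuclideanSpace ℝ (Fin n)) :
    ‖mono n β x‖ ≤ ‖x‖ ^ (∑ i, β i) := by
  unfold mono
  rw [← Finset.prod_pow_eq_pow_sum]
  calc ‖∏ i, (x i : ℂ) ^ β i‖ = ∏ i, |x i| ^ β i := by
        rw [norm_prod]
        exact Finset.prod_congr rfl fun i _ => by
          rw [norm_pow, Complex.norm_real, Real.norm_eq_abs]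
    _ ≤ ∏ i, ‖x‖ ^ β i := by
        apply Finset.prod_le_prod (fun i _ => by positivity)
        exact fun i _ => pow_le_pow_left₀ (abs_nonneg _) (abs_coord_le_norm x i) _
    _ = _ := rfl

/-- A Schwartz function times a monomial is integrable. -/
lemma integrable_mul_mono {n : ℕ} (h : SchwartzMap (EuclideanSpace ℝ (Fin n)) ℂ)
    (β : Fin n → ℕ) : Integrable (fun x => h x * mono n β x) := by
  refine (h.integrable_pow_mul volume (∑ i, β i)).mono'
    ((h.continuous.mul (continuous_mono n β)).aestronglyMeasurable) ?_
  filter_upwards with x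
  rw [norm_mul]
  calc ‖h x‖ * ‖mono n β x‖ ≤ ‖h x‖ * ‖x‖ ^ (∑ i, β i) :=
        mul_le_mul_of_nonneg_left (norm_mono_le β x) (norm_nonneg _)
    _ = ‖x‖ ^ (∑ i, β i) * ‖h x‖ := mul_comm _ _

/-- Binomial expansion of the monomial at a sum. -/
lemma mono_add_expand {n : ℕ} (α : Fin n → ℕ) (u y : EuclideanSpace ℝ (Fin n)) :
    mono n α (u + y) = ∑ β ∈ Fintype.piFinset (fun i => Finset.range (α i + 1)),
      mono n β u * (mono n (fun i => α i - β i) y *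
        ∏ i, (Nat.choose (α i) (β i) : ℂ)) := by
  unfold mono
  calc (∏ i, ((u + y) i : ℂ) ^ α i)
      = ∏ i, ((u i : ℂ) + (y i : ℂ)) ^ α i := by
        refine Finset.prod_congr rfl fun i _ => ?_
        congr 1
        push_cast [PiLp.add_apply]
        ring
    _ = ∏ i, ∑ k ∈ Finset.range (α i + 1),
          (u i : ℂ) ^ k * (y i : ℂ) ^ (α i - k) * (Nat.choose (α i) k : ℂ) := by
        exact Finset.prod_congr rfl fun i _ => add_pow _ _ _
    _ = ∑ β ∈ Fintype.piFinset (fun i => Finset.range (α i + 1)),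
          ∏ i, ((u i : ℂ) ^ β i * (y i : ℂ) ^ (α i - β i) * (Nat.choose (α i) (β i) : ℂ)) :=
        Finset.prod_univ_sum _ _
    _ = _ := by
        refine Finset.sum_congr rfl fun β _ => ?_
        rw [Finset.prod_mul_distrib, Finset.prod_mul_distrib]
        ring

/-- If `g` is a Schwartz function and `f` is a Schwartz function all of whose moments
vanish, then the convolution `g * f` also has all moments vanishing, with absolutely
convergent moment integrals. -/
theorem conv_schwartz_vanishing_moments (n : ℕ)
    (g f : SchwartzMap (EuclideanSpace ℝ (Fin n)) ℂ)
    (hf : ∀ α : Fin n → ℕ, (∫ x, f x * mono n α x) = 0) :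
    ∀ α : Fin n → ℕ,
      Integrable (fun x => conv n ⇑g ⇑f x * mono n α x) ∧
      (∫ x, conv n ⇑g ⇑f x * mono n α x) = 0 := by
  intro α
  set E := EuclideanSpace ℝ (Fin n)
  set S := Fintype.piFinset (fun i => Finset.range (α i + 1)) with hS
  -- the two families of integrable factors
  set P1 : (Fin n → ℕ) → E → ℂ :=
    fun β y => (g y * mono n (fun i => α i - β i) y) * ∏ i, (Nat.choose (α i) (β i) : ℂ)
    with hP1def
  set P2 : (Fin n → ℕ) → E → ℂ := fun β u => f u * mono n β u with hP2def
  have hP1 : ∀ β, Integrable (P1 β) := fun β =>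
    (integrable_mul_mono g _).mul_const _
  have hP2 : ∀ β, Integrable (P2 β) := fun β => integrable_mul_mono f β
  -- pointwise expansion of the integrand
  have hexp : ∀ x y : E, g y * f (x - y) * mono n α x =
      ∑ β ∈ S, P1 β y * P2 β (x - y) := by
    intro x y
    have : mono n α x = mono n α ((x - y) + y) := by rw [sub_add_cancel]
    rw [this, mono_add_expand, Finset.mul_sum]
    refine Finset.sum_congr rfl fun β _ => ?_
    simp only [hP1def, hP2def]
    ring
  -- integrability of each product term on the product space
  have hprod : ∀ β, Integrable (fun p : E × E => P1 β p.2 * P2 β (p.1 - p.2))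
      ((volume : Measure E).prod volume) := by
    intro β
    have := (hP1 β).convolution_integrand (ContinuousLinearMap.mul ℝ ℂ) (hP2 β)
    simpa using this
  -- integrability of the full integrand on the product space
  have hF : Integrable (fun p : E × E => g p.2 * f (p.1 - p.2) * mono n α p.1)
      ((volume : Measure E).prod volume) := by
    have : (fun p : E × E => g p.2 * f (p.1 - p.2) * mono n α p.1) =
        fun p : E × E => ∑ β ∈ S, P1 β p.2 * P2 β (p.1 - p.2) := by
      funext p; exact hexp p.1 p.2
    rw [this]
    exact integrable_finset_sum _ fun β _ => hprod β
  -- rewrite conv * mono as an inner integral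
  have hconv : ∀ x : E, conv n ⇑g ⇑f x * mono n α x =
      ∫ y, g y * f (x - y) * mono n α x := by
    intro x
    rw [conv, ← integral_mul_const]
  constructor
  · have h1 : Integrable (fun x => ∫ y, g y * f (x - y) * mono n α x) volume :=
      hF.integral_prod_left
    exact h1.congr (by filter_upwards with x using (hconv x).symm)
  · calc (∫ x, conv n ⇑g ⇑f x * mono n α x)
        = ∫ x, ∫ y, g y * f (x - y) * mono n α x := by
          exact integral_congr_ae (by filter_upwards with x using hconv x)
      _ = ∫ y, ∫ x, g y * f (x - y) * mono n α x := integral_integral_swap hF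
      _ = 0 := by
          rw [← integral_zero (α := E) (G := ℂ) (μ := volume)]
          refine integral_congr_ae ?_
          filter_upwards with y
          calc (∫ x, g y * f (x - y) * mono n α x)
              = ∫ x, ∑ β ∈ S, P1 β y * P2 β (x - y) := by
                exact integral_congr_ae (by filter_upwards with x using hexp x y)
            _ = ∑ β ∈ S, ∫ x, P1 β y * P2 β (x - y) :=
                integral_finset_sum _ fun β _ =>
                  ((hP2 β).comp_sub_right y).const_mul _
            _ = 0 := by
                refine Finset.sum_eq_zero fun β _ => ?_
                rw [integral_const_mul, integral_sub_right_eq_self (fun u => P2 β u) y,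
                  hf β, mul_zero]
end

section
/- Let K ∈ 𝓢(ℝⁿ) be a Schwartz function. For every ε > 0 there exists a compact neighborhood U of 0 in ℝⁿ such that ∫_{ℝⁿ} osc_U K(x) dx < ε, where osc_U K(x) = sup_{y∈U} |K(x) − K(x−y)|. -/
/-!
If `‖Df(z)‖ ≤ C (1 + ‖z‖)^{-r}`, then by the mean value inequality and Peetre's inequality
`1 + ‖x‖ ≤ 2 (1 + ‖z‖)` for `‖x - z‖ ≤ 1`, the oscillation of `f` over the ball of radius
`δ ≤ 1` is at most `2^r C δ (1 + ‖x‖)^{-r}`. For `r > n` this weight is integrable, so the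
`L¹`-norm of the oscillation is `O(δ)`. Schwartz functions have such a bound on their derivative.
-/

open MeasureTheory Metric Filter Topology Module
open scoped ENNReal

noncomputable def osc {E F : Type*} [Sub E] [NormedAddCommGroup F] (U : Set E) (f : E → F)
    (x : E) : ℝ≥0∞ :=
  ⨆ y ∈ U, (‖f x - f (x - y)‖₊ : ℝ≥0∞)

lemma one_add_norm_le_two_mul_one_add_norm {E : Type*} [SeminormedAddCommGroup E] {x z : E}
    (h : ‖x - z‖ ≤ 1) : 1 + ‖x‖ ≤ 2 * (1 + ‖z‖) := by
  have := norm_le_norm_add_norm_sub' x z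
  linarith [norm_nonneg z]

lemma one_add_norm_rpow_neg_le_s11 {E : Type*} [SeminormedAddCommGroup E] {x z : E}
    (h : ‖x - z‖ ≤ 1) {r : ℝ} (hr : 0 ≤ r) :
    (1 + ‖z‖) ^ (-r) ≤ 2 ^ r * (1 + ‖x‖) ^ (-r) :=
  calc (1 + ‖z‖) ^ (-r) = 2 ^ r * (2 * (1 + ‖z‖)) ^ (-r) := by
        rw [Real.mul_rpow zero_le_two (by positivity), ← mul_assoc,
          ← Real.rpow_add zero_lt_two, add_neg_cancel, Real.rpow_zero, one_mul]
    _ ≤ 2 ^ r * (1 + ‖x‖) ^ (-r) :=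
        mul_le_mul_of_nonneg_left (Real.rpow_le_rpow_of_nonpos (by positivity)
          (one_add_norm_le_two_mul_one_add_norm h) (neg_nonpos.2 hr)) (by positivity)

section Oscillation

variable {E F : Type*} [NormedAddCommGroup E] [NormedSpace ℝ E]
  [NormedAddCommGroup F] [NormedSpace ℝ F]
  {f : E → F} {C r : ℝ}

lemma norm_sub_le_of_norm_fderiv_le (hf : Differentiable ℝ f) (hr : 0 ≤ r)
    (hC : ∀ z, ‖fderiv ℝ f z‖ ≤ C * (1 + ‖z‖) ^ (-r)) (x : E) {y : E} {δ : ℝ} (hy : ‖y‖ ≤ δ)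
    (hδ : δ ≤ 1) : ‖f x - f (x - y)‖ ≤ 2 ^ r * C * δ * (1 + ‖x‖) ^ (-r) := by
  set B := 2 ^ r * C * (1 + ‖x‖) ^ (-r)
  have hball : ∀ z ∈ closedBall x 1, ‖fderiv ℝ f z‖ ≤ B := by
    intro z hz
    calc ‖fderiv ℝ f z‖ ≤ C * (1 + ‖z‖) ^ (-r) := hC z
      _ ≤ C * (2 ^ r * (1 + ‖x‖) ^ (-r)) := by
          gcongr
          · exact nonneg_of_mul_nonneg_left ((norm_nonneg _).trans (hC z)) (by positivity)
          · exact one_add_norm_rpow_neg_le_s11 (by rwa [← dist_eq_norm, dist_comm]) hr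
      _ = B := by ring
  have hB : 0 ≤ B := (norm_nonneg _).trans (hball x (mem_closedBall_self zero_le_one))
  have hxy : x - y ∈ closedBall x 1 := by simpa [dist_eq_norm] using hy.trans hδ
  have hmv := (convex_closedBall x 1).norm_image_sub_le_of_norm_fderiv_le
    (fun z _ => hf z) hball (mem_closedBall_self zero_le_one) hxy
  rw [sub_sub_cancel_left, norm_neg, norm_sub_rev] at hmv
  calc ‖f x - f (x - y)‖ ≤ B * ‖y‖ := hmv
    _ ≤ B * δ := by gcongr
    _ = 2 ^ r * C * δ * (1 + ‖x‖) ^ (-r) := by ring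

lemma osc_closedBall_le (hf : Differentiable ℝ f) (hr : 0 ≤ r)
    (hC : ∀ z, ‖fderiv ℝ f z‖ ≤ C * (1 + ‖z‖) ^ (-r)) {δ : ℝ} (hδ : δ ≤ 1) (x : E) :
    osc (closedBall 0 δ) f x ≤
      ENNReal.ofReal (2 ^ r * C * δ) * ENNReal.ofReal ((1 + ‖x‖) ^ (-r)) := by
  refine iSup₂_le fun y hy => ?_
  rw [mem_closedBall_zero_iff] at hy
  rw [← ENNReal.ofReal_mul' (by positivity), ← ENNReal.ofReal_coe_nnreal, coe_nnnorm]
  exact ENNReal.ofReal_le_ofReal (norm_sub_le_of_norm_fderiv_le hf hr hC x hy hδ)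

variable [FiniteDimensional ℝ E] [MeasurableSpace E] [BorelSpace E] (μ : Measure E)
  [μ.IsAddHaarMeasure]

lemma tendsto_lintegral_osc_closedBall_zero (hf : Differentiable ℝ f)
    (hr : (finrank ℝ E : ℝ) < r) (hC : ∀ z, ‖fderiv ℝ f z‖ ≤ C * (1 + ‖z‖) ^ (-r)) :
    Tendsto (fun δ => ∫⁻ x, osc (closedBall 0 δ) f x ∂μ) (𝓝[>] 0) (𝓝 0) := by
  have hr0 : 0 ≤ r := (Nat.cast_nonneg _).trans hr.le
  set I := ∫⁻ x, ENNReal.ofReal ((1 + ‖x‖) ^ (-r)) ∂μ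
  have hI : I ≠ ∞ := (finite_integral_one_add_norm hr).ne
  have hbound : ∀ᶠ δ in 𝓝[>] (0 : ℝ),
      ∫⁻ x, osc (closedBall 0 δ) f x ∂μ ≤ ENNReal.ofReal (2 ^ r * C * δ) * I := by
    filter_upwards [nhdsWithin_le_nhds (eventually_le_nhds zero_lt_one)] with δ hδ
    rw [← lintegral_const_mul' _ _ ENNReal.ofReal_ne_top]
    exact lintegral_mono (osc_closedBall_le hf hr0 hC hδ)
  have hlim : Tendsto (fun δ : ℝ => ENNReal.ofReal (2 ^ r * C * δ) * I) (𝓝[>] 0) (𝓝 0) := by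
    have : Tendsto (fun δ : ℝ => 2 ^ r * C * δ) (𝓝[>] 0) (𝓝 0) := tendsto_nhdsWithin_of_tendsto_nhds
      (by simpa using (continuous_const_mul (2 ^ r * C)).tendsto 0)
    simpa using ENNReal.Tendsto.mul_const (ENNReal.tendsto_ofReal this) (Or.inr hI)
  exact tendsto_of_tendsto_of_tendsto_of_le_of_le' tendsto_const_nhds hlim
    (Eventually.of_forall fun _ => zero_le) hbound

end Oscillation

namespace SchwartzMap

variable {E F : Type*} [NormedAddCommGroup E] [NormedSpace ℝ E]
  [NormedAddCommGroup F] [NormedSpace ℝ F]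

lemma exists_norm_fderiv_le_mul_one_add_norm_rpow_neg (f : 𝓢(E, F)) (k : ℕ) :
    ∃ C, ∀ x, ‖fderiv ℝ f x‖ ≤ C * (1 + ‖x‖) ^ (-(k : ℝ)) := by
  refine ⟨2 ^ k * (Finset.Iic (k, 1)).sup (fun m => SchwartzMap.seminorm ℝ m.1 m.2) f,
    fun x => ?_⟩
  rw [Real.rpow_neg (by positivity), ← div_eq_mul_inv, le_div_iff₀' (by positivity),
    Real.rpow_natCast, ← norm_iteratedFDeriv_one]
  exact one_add_le_sup_seminorm_apply (m := (k, 1)) le_rfl le_rfl f x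

lemma tendsto_lintegral_osc_closedBall_zero [FiniteDimensional ℝ E] [MeasurableSpace E]
    [BorelSpace E] (μ : Measure E) [μ.IsAddHaarMeasure] (f : 𝓢(E, F)) :
    Tendsto (fun δ => ∫⁻ x, osc (closedBall 0 δ) f x ∂μ) (𝓝[>] 0) (𝓝 0) := by
  obtain ⟨C, hC⟩ := f.exists_norm_fderiv_le_mul_one_add_norm_rpow_neg (finrank ℝ E + 1)
  exact _root_.tendsto_lintegral_osc_closedBall_zero μ f.differentiable
    (by push_cast; exact lt_add_one _) hC

end SchwartzMap

/-- For a Schwartz function `K` on `ℝⁿ` and every `ε > 0` there is a compact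
neighborhood `U` of `0` such that the `L¹`-norm of the oscillation
`osc_U K(x) = sup_{y ∈ U} |K(x) − K(x−y)|` is smaller than `ε`. -/
theorem osc_L1_small (n : ℕ) (K : SchwartzMap (EuclideanSpace ℝ (Fin n)) ℂ) :
    ∀ ε : ℝ, 0 < ε →
      ∃ U : Set (EuclideanSpace ℝ (Fin n)), IsCompact U ∧
        U ∈ nhds (0 : EuclideanSpace ℝ (Fin n)) ∧
        (∫⁻ x, ⨆ y ∈ U, (‖K x - K (x - y)‖₊ : ℝ≥0∞)) < ENNReal.ofReal ε := by
  intro ε hε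
  obtain ⟨δ, hδε, hδ⟩ := (((K.tendsto_lintegral_osc_closedBall_zero volume).eventually
    (gt_mem_nhds (ENNReal.ofReal_pos.2 hε))).and self_mem_nhdsWithin).exists
  exact ⟨closedBall 0 δ, isCompact_closedBall _ _, closedBall_mem_nhds _ hδ, hδε⟩
end

section
/- Let Γ ⊂ ℝⁿ be a separated set, and let N ≥ n + 1 be a real number. Then there exists a constant C, depending only on N, n, and Γ, such that for all integers η ≤ j and all x ∈ ℝⁿ: ∑_{γ∈Γ} 2^{−jn} (1 + 2^η |x − 2^{−j}γ|)^{−N} ≤ C · 2^{−ηn}. -/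
/-!
With `s = 2^(η - j) ≤ 1` and `y = 2^η x`, the summand is `2^(-ηn) s^n (1 + |y - sγ|)^(-N)`.
If the ball of radius `ε` lies in `W`, the points of `Γ` are `2ε` apart, so the balls of radius
`sε` around the points `y - sγ` are disjoint; each has volume `s^n |B_ε|`, and on it
`(1 + |z|)^(-N)` is at least `(1 + ε)^(-N)` times its value at the centre. Summing over `γ`,
`s^n ∑ (1 + |y - sγ|)^(-N) ≤ (1 + ε)^N ∫ (1 + |z|)^(-N) dz / |B_ε|`, which is finite since `N > n`.
-/

open MeasureTheory Metric Module
open scoped ENNReal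

section Normed

variable {E : Type*} [NormedAddCommGroup E]

theorem one_add_norm_le_mul_one_add_norm {z c : E} {ε : ℝ} (hε : 0 ≤ ε) (hz : ‖z - c‖ ≤ ε) :
    1 + ‖z‖ ≤ (1 + ε) * (1 + ‖c‖) := by
  nlinarith [norm_le_norm_add_norm_sub' z c, norm_nonneg c]

theorem one_add_norm_rpow_neg_le_s14 {z c : E} {ε N : ℝ} (hε : 0 ≤ ε) (hN : 0 ≤ N)
    (hz : ‖z - c‖ ≤ ε) : (1 + ‖c‖) ^ (-N) ≤ (1 + ε) ^ N * (1 + ‖z‖) ^ (-N) := by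
  have h1ε : 0 < 1 + ε := by linarith
  calc (1 + ‖c‖) ^ (-N) = (1 + ε) ^ N * ((1 + ε) * (1 + ‖c‖)) ^ (-N) := by
        rw [Real.mul_rpow h1ε.le (by positivity), ← mul_assoc, Real.rpow_neg h1ε.le,
          mul_inv_cancel₀ (by positivity), one_mul]
    _ ≤ (1 + ε) ^ N * (1 + ‖z‖) ^ (-N) := by
        gcongr _ * ?_
        exact Real.rpow_le_rpow_of_nonpos (by positivity)
          (one_add_norm_le_mul_one_add_norm hε hz) (neg_nonpos.2 hN)

theorem tsum_mul_measure_ball_le_lintegral [MeasurableSpace E] [BorelSpace E] (μ : Measure E)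
    [μ.IsAddHaarMeasure] {ι : Type*} [Countable ι] {c : ι → E} {r : ℝ}
    (hdisj : Pairwise (Function.onFun Disjoint fun i => ball (c i) r)) {a : ι → ℝ≥0∞}
    {g : E → ℝ≥0∞} (hg : ∀ i, ∀ z ∈ ball (c i) r, a i ≤ g z) :
    (∑' i, a i) * μ (ball 0 r) ≤ ∫⁻ z, g z ∂μ :=
  calc (∑' i, a i) * μ (ball 0 r) = ∑' i, ∫⁻ _ in ball (c i) r, a i ∂μ := by
        simp only [setLIntegral_const, Measure.addHaar_ball_center, ENNReal.tsum_mul_right]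
    _ ≤ ∑' i, ∫⁻ z in ball (c i) r, g z ∂μ :=
        ENNReal.tsum_le_tsum fun i => setLIntegral_mono' measurableSet_ball (hg i)
    _ = ∫⁻ z in ⋃ i, ball (c i) r, g z ∂μ :=
        (lintegral_iUnion (fun _ => measurableSet_ball) hdisj g).symm
    _ ≤ ∫⁻ z, g z ∂μ := setLIntegral_le_lintegral _ _

end Normed

section NormedSpace

variable {E : Type*} [NormedAddCommGroup E] [NormedSpace ℝ E]

theorem two_mul_le_dist_of_disjoint_image_add {W : Set E} {ε : ℝ} (hε : 0 < ε)
    (hW : ball 0 ε ⊆ W) {γ γ' : E} (h : Disjoint ((γ + ·) '' W) ((γ' + ·) '' W)) :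
    2 * ε ≤ dist γ γ' := by
  have hball : ∀ c : E, ball c ε ⊆ (c + ·) '' W := fun c z hz =>
    ⟨z - c, hW (by rwa [mem_ball_zero_iff, ← dist_eq_norm]), add_sub_cancel c z⟩
  rw [two_mul, ← disjoint_ball_ball_iff hε hε]
  exact h.mono (hball γ) (hball γ')

theorem rpow_mul_one_add_norm_rescale {b : ℝ} (hb : 0 < b) (x γ : E) (n : ℕ) (η j N : ℝ) :
    b ^ (-(j * n)) * (1 + b ^ η * ‖x - b ^ (-j) • γ‖) ^ (-N) =
      b ^ (-(η * n)) * ((b ^ (η - j)) ^ n * (1 + ‖b ^ η • x - b ^ (η - j) • γ‖) ^ (-N)) := by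
  have hnorm : ‖b ^ η • x - b ^ (η - j) • γ‖ = b ^ η * ‖x - b ^ (-j) • γ‖ := by
    rw [sub_eq_add_neg η j, Real.rpow_add hb, mul_smul, ← smul_sub, norm_smul,
      Real.norm_of_nonneg (by positivity)]
  have hpow : b ^ (-(j * n)) = b ^ (-(η * n)) * (b ^ (η - j)) ^ n := by
    rw [← Real.rpow_natCast, ← Real.rpow_mul hb.le, ← Real.rpow_add hb]
    ring_nf
  rw [hnorm, hpow, mul_assoc]

end NormedSpace

section FiniteDimensional

variable {E : Type*} [NormedAddCommGroup E] [NormedSpace ℝ E] [FiniteDimensional ℝ E]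

theorem tsum_one_add_norm_rpow_neg_mul_measure_ball_le [MeasurableSpace E] [BorelSpace E]
    (μ : Measure E) [μ.IsAddHaarMeasure] {Γ : Set E} {ε : ℝ} (hε : 0 < ε)
    (hΓ : Γ.Pairwise fun γ γ' => 2 * ε ≤ dist γ γ') {N : ℝ} (hN : 0 ≤ N) {s : ℝ} (hs0 : 0 < s)
    (hs1 : s ≤ 1) (y : E) :
    (∑' γ : Γ, ENNReal.ofReal (s ^ finrank ℝ E * (1 + ‖y - s • (γ : E)‖) ^ (-N))) * μ (ball 0 ε)
      ≤ ENNReal.ofReal ((1 + ε) ^ N) * ∫⁻ z, ENNReal.ofReal ((1 + ‖z‖) ^ (-N)) ∂μ := by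
  set c : Γ → E := fun γ => y - s • (γ : E)
  have hdisj : Pairwise (Function.onFun Disjoint fun γ => ball (c γ) (s * ε)) := by
    intro γ γ' hne
    apply ball_disjoint_ball
    calc s * ε + s * ε = s * (2 * ε) := by ring
      _ ≤ s * dist (γ : E) γ' := by gcongr; exact hΓ γ.2 γ'.2 (Subtype.coe_injective.ne hne)
      _ = dist (c γ) (c γ') := by
          rw [dist_sub_left, dist_smul₀, Real.norm_of_nonneg hs0.le, dist_comm]
  have : Countable Γ := hdisj.countable_of_isOpen_disjoint (fun _ => isOpen_ball)
    (fun _ => nonempty_ball.2 (by positivity))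
  calc (∑' γ : Γ, ENNReal.ofReal (s ^ finrank ℝ E * (1 + ‖c γ‖) ^ (-N))) * μ (ball 0 ε)
      = (∑' γ : Γ, ENNReal.ofReal ((1 + ‖c γ‖) ^ (-N))) * μ (ball 0 (s * ε)) := by
        simp_rw [Measure.addHaar_ball_mul_of_pos μ 0 hs0, ← mul_assoc, ← ENNReal.tsum_mul_right,
          ENNReal.ofReal_mul (by positivity : (0 : ℝ) ≤ s ^ finrank ℝ E), mul_comm]
    _ ≤ ∫⁻ z, ENNReal.ofReal ((1 + ε) ^ N) * ENNReal.ofReal ((1 + ‖z‖) ^ (-N)) ∂μ := by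
        refine tsum_mul_measure_ball_le_lintegral μ hdisj fun γ z hz => ?_
        rw [← ENNReal.ofReal_mul (by positivity)]
        refine ENNReal.ofReal_le_ofReal (one_add_norm_rpow_neg_le_s14 hε.le hN ?_)
        rw [← dist_eq_norm]
        exact (mem_ball.1 hz).le.trans (mul_le_of_le_one_left hε.le hs1)
    _ = ENNReal.ofReal ((1 + ε) ^ N) * ∫⁻ z, ENNReal.ofReal ((1 + ‖z‖) ^ (-N)) ∂μ :=
        lintegral_const_mul' _ _ ENNReal.ofReal_ne_top

theorem exists_tsum_one_add_norm_rpow_neg_le {Γ : Set E} {ε : ℝ} (hε : 0 < ε)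
    (hΓ : Γ.Pairwise fun γ γ' => 2 * ε ≤ dist γ γ') {N : ℝ} (hN : finrank ℝ E < N) :
    ∃ C : ℝ, 0 ≤ C ∧ ∀ s : ℝ, 0 < s → s ≤ 1 → ∀ y : E,
      ∑' γ : Γ, ENNReal.ofReal (s ^ finrank ℝ E * (1 + ‖y - s • (γ : E)‖) ^ (-N)) ≤
        ENNReal.ofReal C := by
  borelize E
  set μ : Measure E := Measure.addHaar
  set J := ∫⁻ z, ENNReal.ofReal ((1 + ‖z‖) ^ (-N)) ∂μ
  set m := μ (ball 0 ε)
  have hm0 : m ≠ 0 := (measure_ball_pos μ 0 hε).ne'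
  have hmtop : m ≠ ∞ := measure_ball_lt_top.ne
  have hJ : J ≠ ∞ := (finite_integral_one_add_norm hN).ne
  refine ⟨(1 + ε) ^ N * J.toReal / m.toReal, by positivity, fun s hs0 hs1 y => ?_⟩
  rw [ENNReal.ofReal_div_of_pos (ENNReal.toReal_pos hm0 hmtop), ENNReal.ofReal_mul (by positivity),
    ENNReal.ofReal_toReal hJ, ENNReal.ofReal_toReal hmtop,
    ENNReal.le_div_iff_mul_le (Or.inl hm0) (Or.inl hmtop)]
  exact tsum_one_add_norm_rpow_neg_mul_measure_ball_le μ hε hΓ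
    ((Nat.cast_nonneg _).trans hN.le) hs0 hs1 y

end FiniteDimensional

/-- Lemma 6.5 of Führ–Mayeli, Euclidean case: for a separated set `Γ ⊂ ℝⁿ` and
`N ≥ n + 1`, there is a constant `C` (depending only on `N`, `n`, `Γ`) such that for all
integers `η ≤ j` and all `x ∈ ℝⁿ`:
`∑_{γ∈Γ} 2^{−jn} (1 + 2^η |x − 2^{−j}γ|)^{−N} ≤ C · 2^{−ηn}`. -/
theorem separated_sum_decay (n : ℕ) (Γ : Set (EuclideanSpace ℝ (Fin n)))
    (hsep : ∃ W : Set (EuclideanSpace ℝ (Fin n)), IsOpen W ∧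
      (0 : EuclideanSpace ℝ (Fin n)) ∈ W ∧ Bornology.IsBounded W ∧
      Γ.Pairwise fun γ γ' => Disjoint ((γ + ·) '' W) ((γ' + ·) '' W))
    (N : ℝ) (hN : (n : ℝ) + 1 ≤ N) :
    ∃ C : ℝ, 0 ≤ C ∧ ∀ η j : ℤ, η ≤ j → ∀ x : EuclideanSpace ℝ (Fin n),
      (∑' γ : Γ, ENNReal.ofReal ((2 : ℝ) ^ (-((j : ℝ) * n)) *
          (1 + (2 : ℝ) ^ ((η : ℝ)) *
            ‖x - (2 : ℝ) ^ (-(j : ℝ)) • (γ : EuclideanSpace ℝ (Fin n))‖) ^ (-N))) ≤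
        ENNReal.ofReal (C * (2 : ℝ) ^ (-((η : ℝ) * n))) := by
  obtain ⟨W, hWopen, hW0, -, hWdisj⟩ := hsep
  obtain ⟨ε, hε, hballW⟩ := Metric.isOpen_iff.1 hWopen 0 hW0
  have hΓ : Γ.Pairwise fun γ γ' => 2 * ε ≤ dist γ γ' := fun γ hγ γ' hγ' hne =>
    two_mul_le_dist_of_disjoint_image_add hε hballW (hWdisj hγ hγ' hne)
  obtain ⟨C, hC0, hC⟩ := exists_tsum_one_add_norm_rpow_neg_le hε hΓ
    (N := N) (by rw [finrank_euclideanSpace_fin]; linarith)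
  refine ⟨C, hC0, fun η j hηj x => ?_⟩
  have hs1 : (2 : ℝ) ^ ((η : ℝ) - j) ≤ 1 :=
    Real.rpow_le_one_of_one_le_of_nonpos one_le_two (sub_nonpos.2 (Int.cast_le.2 hηj))
  simp_rw [rpow_mul_one_add_norm_rescale two_pos, ENNReal.ofReal_mul (by positivity :
    (0 : ℝ) ≤ (2 : ℝ) ^ (-((η : ℝ) * n))), ENNReal.tsum_mul_left]
  rw [mul_comm C, ENNReal.ofReal_mul (by positivity)]
  gcongr
  simpa only [finrank_euclideanSpace_fin] using hC _ (by positivity) hs1 ((2 : ℝ) ^ (η : ℝ) • x)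
end

section
/- Let Γ ⊂ ℝⁿ be a regular sampling set with Γ-tile W, let ψ ∈ 𝓢(ℝⁿ), and let (c_γ)_{γ∈Γ} be a bounded family of complex numbers; set h = ∑_{γ∈Γ} c_γ 𝟙_{γ+W}. Then for every y ∈ ℝⁿ the series ∑_{γ∈Γ} |W| c_γ ψ(y−γ) converges absolutely and | ∑_{γ∈Γ} |W| c_γ ψ(y−γ) − (h * ψ)(y) | ≤ (|h| * Ω_W ψ)(y), where Ω_W ψ(z) = sup_{w∈W} |ψ(z+w) − ψ(z)| and |W| is the Lebesgue measure of W. -/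
open MeasureTheory
open scoped ENNReal

/-- `Γ` is a regular sampling set of `ℝⁿ` with `Γ`-tile `W`: `Γ` is countable, `W` is a
relatively compact (= bounded) Borel neighborhood of `0`, the translates `γ + W` cover
`ℝⁿ` up to a null set, and any two distinct translates overlap in a null set. -/
def IsRegSampling (n : ℕ) (Γ W : Set (EuclideanSpace ℝ (Fin n))) : Prop :=
  Γ.Countable ∧ MeasurableSet W ∧ W ∈ nhds (0 : EuclideanSpace ℝ (Fin n)) ∧
    Bornology.IsBounded W ∧
    volume ((Set.univ : Set (EuclideanSpace ℝ (Fin n))) \ ⋃ γ ∈ Γ, (γ + ·) '' W) = 0 ∧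
    Γ.Pairwise fun γ γ' => volume (((γ + ·) '' W) ∩ ((γ' + ·) '' W)) = 0

/-- The step function `h = ∑_{γ∈Γ} c_γ 𝟙_{γ+W}`. -/
noncomputable def tileFn (n : ℕ) (Γ W : Set (EuclideanSpace ℝ (Fin n)))
    (c : Γ → ℂ) : EuclideanSpace ℝ (Fin n) → ℂ :=
  fun x => ∑' γ : Γ, Set.indicator (((γ : EuclideanSpace ℝ (Fin n)) + ·) '' W) (fun _ => c γ) x

/-!
On each tile `γ + W` the step function `h` equals `c_γ` almost everywhere, so `(h * ψ)(y)` is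
the sum of the tile integrals `∫_{γ+W} c_γ ψ(y - z) dz`, while the Riemann term
`|W| c_γ ψ(y - γ)` is the integral of the constant `c_γ ψ(y - γ)` over the same tile. Writing
`z = γ + w`, we have `|ψ(y - γ) - ψ(y - z)| ≤ Ω_W ψ(y - z)` on the tile, and summing over the
tiles gives the estimate. The same comparison, `|ψ(y - γ)| ≤ |ψ(y - z)| + Ω_W ψ(y - z)`, gives
absolute convergence, because `Ω_W ψ` is integrable: for bounded `W` this follows from the decay
of `ψ` and Peetre's inequality `1 + |x| ≤ (1 + |w|) (1 + |x + w|)`.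
-/

open Set Function
open scoped SchwartzMap

noncomputable def stepFunction {α ι E : Type*} [AddCommMonoid E] [TopologicalSpace E]
    (T : ι → Set α) (c : ι → E) (z : α) : E :=
  ∑' i, (T i).indicator (fun _ => c i) z

/-- The paper's `Ω_W φ`. -/
noncomputable def localOsc {E F : Type*} [Add E] [SeminormedAddGroup F] (W : Set E) (φ : E → F)
    (x : E) : ℝ≥0∞ :=
  ⨆ w ∈ W, ‖φ (x + w) - φ x‖ₑ

section SetIntegral

variable {α E : Type*} [MeasurableSpace α] {μ : Measure α} [NormedAddCommGroup E]
  [NormedSpace ℝ E] {s : Set α} {f : α → E} {a : E} {g : α → ℝ≥0∞}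

theorem enorm_measureReal_smul_le_setLIntegral (hs : MeasurableSet s)
    (hg : ∀ z ∈ s, ‖a - f z‖ₑ ≤ g z) :
    ‖μ.real s • a‖ₑ ≤ ∫⁻ z in s, ‖f z‖ₑ + g z ∂μ := by
  calc ‖μ.real s • a‖ₑ ≤ μ s * ‖a‖ₑ := by
        rw [enorm_smul, Real.enorm_eq_ofReal measureReal_nonneg]
        gcongr
        exact ENNReal.ofReal_toReal_le
    _ = ∫⁻ _ in s, ‖a‖ₑ ∂μ := by rw [setLIntegral_const, mul_comm]
    _ ≤ ∫⁻ z in s, ‖f z‖ₑ + g z ∂μ := setLIntegral_mono' hs fun z hz => calc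
        ‖a‖ₑ = ‖f z + (a - f z)‖ₑ := by rw [add_sub_cancel]
        _ ≤ ‖f z‖ₑ + ‖a - f z‖ₑ := enorm_add_le _ _
        _ ≤ ‖f z‖ₑ + g z := by gcongr; exact hg z hz

theorem enorm_measureReal_smul_sub_setIntegral_le [CompleteSpace E] (hs : MeasurableSet s)
    (hμs : μ s ≠ ∞) (hf : IntegrableOn f s μ) (hg : ∀ z ∈ s, ‖a - f z‖ₑ ≤ g z) :
    ‖μ.real s • a - ∫ z in s, f z ∂μ‖ₑ ≤ ∫⁻ z in s, g z ∂μ := by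
  rw [← setIntegral_const, ← integral_sub (integrableOn_const (C := a) hμs) hf]
  exact (enorm_integral_le_lintegral_enorm _).trans (setLIntegral_mono' hs hg)

end SetIntegral

section StepFunction

variable {α ι : Type*} [MeasurableSpace α] {μ : Measure α} [Countable ι] {T : ι → Set α}

theorem ae_stepFunction_eq_of_mem {E : Type*} [AddCommMonoid E] [TopologicalSpace E]
    (hTd : Pairwise (AEDisjoint μ on T)) (c : ι → E) (i : ι) :
    ∀ᵐ z ∂μ, z ∈ T i → stepFunction T c z = c i := by
  have hsingle : ∀ᵐ z ∂μ, ∀ j, j ≠ i → z ∉ T i ∩ T j :=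
    ae_all_iff.2 fun j => by
      by_cases hj : j = i
      · exact Filter.Eventually.of_forall fun _ h => absurd hj h
      · exact (measure_eq_zero_iff_ae_notMem.1 (hTd (Ne.symm hj))).mono fun _ h _ => h
  filter_upwards [hsingle] with z hz hzi
  rw [stepFunction,
    tsum_eq_single i fun j hj => indicator_of_notMem (fun hzj => hz j hj ⟨hzi, hzj⟩) _]
  exact indicator_of_mem hzi _

theorem tsum_setLIntegral_le_lintegral (hTm : ∀ i, NullMeasurableSet (T i) μ)
    (hTd : Pairwise (AEDisjoint μ on T)) (F : α → ℝ≥0∞) :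
    ∑' i, ∫⁻ z in T i, F z ∂μ ≤ ∫⁻ z, F z ∂μ :=
  (lintegral_iUnion₀ hTm hTd F).symm.le.trans (setLIntegral_le_lintegral _ F)

variable {𝕜 : Type*} [RCLike 𝕜] {c : ι → 𝕜}

theorem hasSum_setIntegral_stepFunction_mul (hTm : ∀ i, MeasurableSet (T i))
    (hTd : Pairwise (AEDisjoint μ on T)) (hcover : ∀ᵐ z ∂μ, z ∈ ⋃ i, T i) {M : ℝ}
    (hc : ∀ i, ‖c i‖ ≤ M) {f : α → 𝕜} (hf : Integrable f μ) :
    HasSum (fun i => ∫ z in T i, c i * f z ∂μ) (∫ z, stepFunction T c z * f z ∂μ) := by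
  have hstep (i : ι) : ∀ᵐ z ∂μ.restrict (T i), stepFunction T c z = c i :=
    (ae_restrict_iff' (hTm i)).2 (ae_stepFunction_eq_of_mem hTd c i)
  have hrestrict : μ.restrict (⋃ i, T i) = μ := Measure.restrict_eq_self_of_ae_mem hcover
  have hint : IntegrableOn (fun z => stepFunction T c z * f z) (⋃ i, T i) μ := by
    refine Integrable.mono' (hf.norm.const_mul M).integrableOn ?_ ?_
    · refine AEStronglyMeasurable.mul ?_ hf.aestronglyMeasurable.restrict
      exact aestronglyMeasurable_iUnion_iff.2 fun i =>
        aestronglyMeasurable_const.congr ((hstep i).mono fun _ hz => hz.symm)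
    · refine (ae_restrict_iUnion_iff _ _).2 fun i => (hstep i).mono fun z hz => ?_
      rw [norm_mul, hz]
      gcongr
      exact hc i
  have hsum := hasSum_integral_iUnion_ae (fun i => (hTm i).nullMeasurableSet) hTd hint
  rw [hrestrict] at hsum
  refine hsum.congr_fun fun i => integral_congr_ae ((hstep i).mono fun z hz => ?_)
  simp only [hz]

variable {M : ℝ} {f : α → 𝕜} {a : ι → 𝕜} {g : α → ℝ≥0∞}

theorem summable_norm_measureReal_smul_mul (hTm : ∀ i, MeasurableSet (T i))
    (hTd : Pairwise (AEDisjoint μ on T)) (hc : ∀ i, ‖c i‖ ≤ M) (hf : Integrable f μ)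
    (hg : ∫⁻ z, g z ∂μ ≠ ∞) (hfa : ∀ i, ∀ z ∈ T i, ‖a i - f z‖ₑ ≤ g z) :
    Summable fun i => ‖μ.real (T i) • (c i * a i)‖ := by
  have hterm (i : ι) : ‖μ.real (T i) • (c i * a i)‖ₑ ≤
      ENNReal.ofReal M * ∫⁻ z in T i, ‖f z‖ₑ + g z ∂μ := by
    rw [← mul_smul_comm, enorm_mul, ← ofReal_norm]
    gcongr
    · exact hc i
    · exact enorm_measureReal_smul_le_setLIntegral (hTm i) (hfa i)
  have hfin : ∑' i, ‖μ.real (T i) • (c i * a i)‖ₑ ≠ ∞ := by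
    refine ne_top_of_le_ne_top ?_ (ENNReal.tsum_le_tsum hterm)
    rw [ENNReal.tsum_mul_left]
    refine ENNReal.mul_ne_top ENNReal.ofReal_ne_top (ne_top_of_le_ne_top ?_
      (tsum_setLIntegral_le_lintegral (fun i => (hTm i).nullMeasurableSet) hTd _))
    rw [lintegral_add_left' hf.aestronglyMeasurable.aemeasurable.enorm]
    exact ENNReal.add_ne_top.2 ⟨hf.hasFiniteIntegral.ne, hg⟩
  simpa using ENNReal.summable_toReal hfin

theorem enorm_tsum_measureReal_smul_sub_integral_le (hTm : ∀ i, MeasurableSet (T i))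
    (hTd : Pairwise (AEDisjoint μ on T)) (hcover : ∀ᵐ z ∂μ, z ∈ ⋃ i, T i)
    (hμT : ∀ i, μ (T i) ≠ ∞) (hc : ∀ i, ‖c i‖ ≤ M) (hf : Integrable f μ)
    (hg : ∫⁻ z, g z ∂μ ≠ ∞) (hfa : ∀ i, ∀ z ∈ T i, ‖a i - f z‖ₑ ≤ g z) :
    ‖∑' i, μ.real (T i) • (c i * a i) - ∫ z, stepFunction T c z * f z ∂μ‖ₑ ≤
      ∫⁻ z, ‖stepFunction T c z‖ₑ * g z ∂μ := by
  have hsum := (summable_norm_measureReal_smul_mul hTm hTd hc hf hg hfa).of_norm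
  rw [← (hsum.hasSum.sub (hasSum_setIntegral_stepFunction_mul hTm hTd hcover hc hf)).tsum_eq]
  calc _ ≤ ∑' i, ‖μ.real (T i) • (c i * a i) - ∫ z in T i, c i * f z ∂μ‖ₑ :=
        enorm_tsum_le_tsum_enorm
    _ ≤ ∑' i, ∫⁻ z in T i, ‖stepFunction T c z‖ₑ * g z ∂μ := ENNReal.tsum_le_tsum fun i => ?_
    _ ≤ _ := tsum_setLIntegral_le_lintegral (fun i => (hTm i).nullMeasurableSet) hTd _
  calc _ ≤ ∫⁻ z in T i, ‖c i‖ₑ * g z ∂μ :=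
        enorm_measureReal_smul_sub_setIntegral_le (hTm i) (hμT i)
          (hf.integrableOn.const_mul (c i)) fun z hz => by
            rw [← mul_sub, enorm_mul]
            gcongr
            exact hfa i z hz
    _ = _ := setLIntegral_congr_fun_ae (hTm i)
        ((ae_stepFunction_eq_of_mem hTd c i).mono fun z hz hzi => by rw [hz hzi])

end StepFunction

theorem one_add_norm_le_mul_one_add_norm_add {E : Type*} [SeminormedAddCommGroup E] (x w : E) :
    1 + ‖x‖ ≤ (1 + ‖w‖) * (1 + ‖x + w‖) := by
  have : ‖x‖ ≤ ‖x + w‖ + ‖w‖ := by simpa using norm_sub_le (x + w) w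
  nlinarith [norm_nonneg w, norm_nonneg (x + w)]

theorem enorm_sub_le_localOsc_of_mem_image_add {E F : Type*} [AddCommGroup E]
    [SeminormedAddGroup F] {W : Set E} (φ : E → F) {γ z : E} (hz : z ∈ (γ + ·) '' W) (y : E) :
    ‖φ (y - γ) - φ (y - z)‖ₑ ≤ localOsc W φ (y - z) := by
  obtain ⟨w, hw, rfl⟩ := hz
  rw [show y - γ = y - (γ + w) + w by abel]
  exact le_biSup (fun w' => ‖φ (y - (γ + w) + w') - φ (y - (γ + w))‖ₑ) hw

namespace SchwartzMap

variable {E F : Type*} [NormedAddCommGroup E] [NormedSpace ℝ E] [NormedAddCommGroup F]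
  [NormedSpace ℝ F]

theorem exists_one_add_norm_pow_mul_norm_add_le (ψ : 𝓢(E, F)) (k : ℕ) (R : ℝ) :
    ∃ C, ∀ x w, ‖w‖ ≤ R → (1 + ‖x‖) ^ k * ‖ψ (x + w)‖ ≤ C := by
  set S := 2 ^ k * (Finset.Iic (k, 0)).sup (fun m => SchwartzMap.seminorm ℝ m.1 m.2) ψ
  refine ⟨(1 + R) ^ k * S, fun x w hw => ?_⟩
  have hR : 0 ≤ 1 + R := by linarith [norm_nonneg w]
  have hdecay : (1 + ‖x + w‖) ^ k * ‖ψ (x + w)‖ ≤ S := by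
    simpa using one_add_le_sup_seminorm_apply (𝕜 := ℝ) (m := (k, 0)) le_rfl le_rfl ψ (x + w)
  calc (1 + ‖x‖) ^ k * ‖ψ (x + w)‖ ≤ ((1 + R) * (1 + ‖x + w‖)) ^ k * ‖ψ (x + w)‖ := by
        gcongr
        exact (one_add_norm_le_mul_one_add_norm_add x w).trans (by gcongr)
    _ = (1 + R) ^ k * ((1 + ‖x + w‖) ^ k * ‖ψ (x + w)‖) := by rw [mul_pow]; ring
    _ ≤ (1 + R) ^ k * S := by gcongr

theorem lintegral_localOsc_lt_top [MeasurableSpace E] (μ : Measure E) [μ.HasTemperateGrowth]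
    (ψ : 𝓢(E, F)) {W : Set E} (hW : Bornology.IsBounded W) :
    ∫⁻ x, localOsc W ψ x ∂μ < ∞ := by
  obtain ⟨R, hR, hWR⟩ := hW.subset_closedBall_lt 0 0
  set k := μ.integrablePower
  obtain ⟨C, hC⟩ := ψ.exists_one_add_norm_pow_mul_norm_add_le k R
  have hbound (x : E) : localOsc W ψ x ≤ ENNReal.ofReal (2 * C * (1 + ‖x‖) ^ (-(k : ℝ))) := by
    refine iSup₂_le fun w hw => ?_
    have hw' : ‖w‖ ≤ R := mem_closedBall_zero_iff.1 (hWR hw)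
    have h0 := hC x 0 (by simpa using hR.le)
    rw [add_zero] at h0
    rw [← ofReal_norm]
    gcongr
    rw [Real.rpow_neg (by positivity), Real.rpow_natCast, ← div_eq_mul_inv,
      le_div_iff₀ (by positivity)]
    calc ‖ψ (x + w) - ψ x‖ * (1 + ‖x‖) ^ k ≤ (‖ψ (x + w)‖ + ‖ψ x‖) * (1 + ‖x‖) ^ k := by
          gcongr
          exact norm_sub_le _ _
      _ ≤ 2 * C := by linarith [hC x w hw']
  exact (lintegral_mono hbound).trans_lt
    ((Measure.integrable_pow_neg_integrablePower μ).const_mul (2 * C)).lintegral_lt_top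

end SchwartzMap

/-- Key estimate in the proof of Lemma 6.8 of Führ–Mayeli, Euclidean case: for a regular
sampling set `Γ` with tile `W`, a Schwartz function `ψ` and bounded coefficients
`(c_γ)`, setting `h = ∑_γ c_γ 𝟙_{γ+W}`, for every `y` the series
`∑_γ |W| c_γ ψ(y−γ)` converges absolutely and
`|∑_γ |W| c_γ ψ(y−γ) − (h*ψ)(y)| ≤ (|h| * Ω_W ψ)(y)`,
where `Ω_W ψ(z) = sup_{w∈W} |ψ(z+w) − ψ(z)|`. -/
theorem riemann_sum_vs_convolution (n : ℕ)
    (Γ W : Set (EuclideanSpace ℝ (Fin n))) (hreg : IsRegSampling n Γ W)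
    (ψ : SchwartzMap (EuclideanSpace ℝ (Fin n)) ℂ)
    (c : Γ → ℂ) (M : ℝ) (hc : ∀ γ : Γ, ‖c γ‖ ≤ M) :
    ∀ y : EuclideanSpace ℝ (Fin n),
      (Summable fun γ : Γ =>
        ‖((volume W).toReal : ℂ) * c γ * ψ (y - (γ : EuclideanSpace ℝ (Fin n)))‖) ∧
      ENNReal.ofReal
          ‖(∑' γ : Γ, ((volume W).toReal : ℂ) * c γ *
              ψ (y - (γ : EuclideanSpace ℝ (Fin n)))) -
            conv n (tileFn n Γ W c) (⇑ψ) y‖ ≤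
        ∫⁻ z, (‖tileFn n Γ W c z‖₊ : ℝ≥0∞) *
          ⨆ w ∈ W, (‖ψ ((y - z) + w) - ψ (y - z)‖₊ : ℝ≥0∞) := by
  intro y
  obtain ⟨hΓ, hWm, -, hWb, hcover, hdisj⟩ := hreg
  have : Countable Γ := hΓ.to_subtype
  set T : Γ → Set (EuclideanSpace ℝ (Fin n)) :=
    fun γ => ((γ : EuclideanSpace ℝ (Fin n)) + ·) '' W
  have hTm (γ : Γ) : MeasurableSet (T γ) := by
    simpa only [T, image_add_left] using hWm.preimage (measurable_const_add _)
  have hTvol (γ : Γ) : volume (T γ) = volume W := by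
    simp only [T, image_add_left, measure_preimage_add]
  have hTd : Pairwise (AEDisjoint volume on T) := fun γ γ' hne =>
    hdisj γ.2 γ'.2 (Subtype.coe_ne_coe.2 hne)
  have hTcover : ∀ᵐ z, z ∈ ⋃ γ, T γ := by
    rw [← compl_eq_univ_sdiff, biUnion_eq_iUnion] at hcover
    exact mem_ae_iff.2 hcover
  have hosc (γ : Γ) (z) (hz : z ∈ T γ) := enorm_sub_le_localOsc_of_mem_image_add ψ hz y
  have hg : ∫⁻ z, localOsc W ψ (y - z) ≠ ∞ := by
    rw [lintegral_sub_left_eq_self]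
    exact (ψ.lintegral_localOsc_lt_top volume hWb).ne
  have hRiemann (γ : Γ) : ((volume W).toReal : ℂ) * c γ * ψ (y - γ) =
      volume.real (T γ) • (c γ * ψ (y - γ)) := by
    rw [Complex.real_smul, measureReal_def, hTvol, mul_assoc]
  simp only [hRiemann, ofReal_norm]
  exact ⟨summable_norm_measureReal_smul_mul hTm hTd hc (ψ.integrable.comp_sub_left y) hg hosc,
    enorm_tsum_measureReal_smul_sub_integral_le hTm hTd hTcover (fun γ => (hTvol γ).trans_ne
      hWb.measure_lt_top.ne) hc (ψ.integrable.comp_sub_left y) hg hosc⟩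
end
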